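/- arXiv:1512.05261 — 12 statements merged into one kernel-verified Lean document; each statement's English description precedes it below -/
import Mathlib

section
/- For positive integers n_1, …, n_t, the integer N = n_1 + ∑_{i=2}^t (n_i − 1) is the least integer such that every t-coloring of the elements of the Boolean lattice B_N contains either a copy of the Boolean lattice B_{n_1} in color 1 or, for some i ∈ {2,…,t}, a chain of n_i subsets all of color i. (That is, BR^1(B_{n_1}, C_{n_2}, …, C_{n_t}) = n_1 + ∑_{i=2}^t (n_i − 1).) -/
/-!
If the sets of nonzero colour in `B_N`, `N = n₀ + m`, contain no chain of length `m + 1`, then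
`B_{n₀}` embeds in colour `0`: the minimal sets of nonzero colour form an antichain, and
`B_{N-1}` embeds in `B_N` avoiding it (add the new point to a set exactly when the set lies above a
set of nonzero colour); this lowers the longest chain of nonzero colour by one, so `m` such steps
give the copy. With `m = ∑ (nᵢ - 1)`, pigeonhole turns a chain of `m + 1` nonzero-coloured sets
into a chain of `nᵢ` sets of colour `i`. Conversely, for `N < n₀ + m`, colouring each set by the
block of its size in a partition of `{0, …, N}` into intervals of lengths `n₀, n₁ - 1, …` admits
neither pattern, because the sizes along a chain are distinct.
-/

open Finset

def HasChain {β : Type*} [Preorder β] (P : β → Prop) (k : ℕ) : Prop :=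
  ∃ A : Fin k → β, StrictMono A ∧ ∀ j, P (A j)

namespace HasChain

variable {β γ : Type*} [Preorder β] [Preorder γ] {P : β → Prop} {k l : ℕ}

theorem of_le (h : HasChain P l) (hkl : k ≤ l) : HasChain P k :=
  let ⟨A, hA, hP⟩ := h
  ⟨A ∘ Fin.castLE hkl, hA.comp (Fin.strictMono_castLE hkl), fun _ => hP _⟩

theorem map {Q : γ → Prop} (h : HasChain P k) (f : β → γ) (hf : StrictMono f)
    (hPQ : ∀ b, P b → Q (f b)) : HasChain Q k :=
  let ⟨A, hA, hP⟩ := h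
  ⟨f ∘ A, hf.comp hA, fun j => hPQ _ (hP j)⟩

theorem exists_fiber_of_sum_lt {ι : Type*} [DecidableEq ι] {c : β → ι} {s : Finset ι}
    (κ : ι → ℕ) (h : HasChain (fun b => c b ∈ s) k) (hk : ∑ i ∈ s, κ i < k) :
    ∃ i ∈ s, HasChain (fun b => c b = i) (κ i + 1) := by
  obtain ⟨A, hA, hs⟩ := h
  have hfib : ∑ i ∈ s, κ i < ∑ i ∈ s, #{j | c (A j) = i} := by
    rwa [← card_eq_sum_card_fiberwise fun j _ => hs j, card_univ, Fintype.card_fin]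
  obtain ⟨i, hi, hlt⟩ := exists_lt_of_sum_lt hfib
  let F : Finset (Fin k) := {j | c (A j) = i}
  have hF : HasChain (fun b => c b = i) #F :=
    ⟨A ∘ F.orderEmbOfFin rfl, hA.comp (F.orderEmbOfFin rfl).strictMono,
      fun j => (mem_filter.1 (F.orderEmbOfFin_mem rfl j)).2⟩
  exact ⟨i, hi, hF.of_le hlt⟩

end HasChain

section LiftAbove

variable {k : ℕ} (P : Finset (Fin (k + 1)) → Prop)

open Classical in
noncomputable def liftAbove (A : Finset (Fin k)) : Finset (Fin (k + 1)) :=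
  if ∃ B ⊆ A.map Fin.castSuccEmb, P B then insert (Fin.last k) (A.map Fin.castSuccEmb)
  else A.map Fin.castSuccEmb

theorem castSucc_mem_liftAbove {A : Finset (Fin k)} {a : Fin k} :
    a.castSucc ∈ liftAbove P A ↔ a ∈ A := by
  unfold liftAbove; split_ifs <;> simp [Fin.castSucc_ne_last]

theorem liftAbove_mono : Monotone (liftAbove P) := by
  intro A A' h
  have hmap : A.map Fin.castSuccEmb ⊆ A'.map Fin.castSuccEmb := map_subset_map.2 h
  unfold liftAbove
  split_ifs with hA hA' hA'
  · exact insert_subset_insert _ hmap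
  · obtain ⟨B, hB, hPB⟩ := hA
    exact absurd ⟨B, hB.trans hmap, hPB⟩ hA'
  · exact hmap.trans (subset_insert _ _)
  · exact hmap

theorem exists_lt_liftAbove {A : Finset (Fin k)} (hA : P (liftAbove P A)) :
    ∃ B < liftAbove P A, P B := by
  unfold liftAbove at hA ⊢
  split_ifs at hA ⊢ with hU
  · obtain ⟨B, hB, hPB⟩ := hU
    exact ⟨B, hB.trans_lt (ssubset_insert (by simp [Fin.castSucc_ne_last])), hPB⟩
  · exact absurd ⟨_, subset_rfl, hA⟩ hU

noncomputable def liftAboveEmbedding : Finset (Fin k) ↪o Finset (Fin (k + 1)) :=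
  OrderEmbedding.ofMapLEIff (liftAbove P) fun _ _ =>
    ⟨fun h _ ha => (castSucc_mem_liftAbove P).1 (h ((castSucc_mem_liftAbove P).2 ha)),
      fun h => liftAbove_mono P h⟩

end LiftAbove

theorem exists_orderEmbedding_avoiding_of_not_hasChain (n : ℕ) :
    ∀ (m : ℕ) (P : Finset (Fin (n + m)) → Prop), ¬ HasChain P (m + 1) →
      ∃ e : Finset (Fin n) ↪o Finset (Fin (n + m)), ∀ A, ¬ P (e A)
  | 0, P, hP =>
    ⟨RelEmbedding.refl _, fun A hA => hP ⟨![A], strictMono_vecEmpty, Fin.forall_fin_one.2 hA⟩⟩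
  | m + 1, P, hP => by
    let e₁ := liftAboveEmbedding P
    obtain ⟨e₀, he₀⟩ := exists_orderEmbedding_avoiding_of_not_hasChain n m (P ∘ e₁) <| by
      rintro ⟨A, hA, hPA⟩
      obtain ⟨B, hB, hPB⟩ := exists_lt_liftAbove P (hPA 0)
      exact hP ⟨Matrix.vecCons B (e₁ ∘ A), (e₁.strictMono.comp hA).vecCons hB,
        Fin.cases hPB hPA⟩
    exact ⟨e₀.trans e₁, he₀⟩

theorem hasChain_finset_fin (n : ℕ) : HasChain (fun _ : Finset (Fin n) => True) (n + 1) := by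
  refine ⟨fun j => {x | x.castSucc < j}, fun j j' hjj' => ?_, fun _ => trivial⟩
  have hj : j ≠ Fin.last n := (hjj'.trans_le (Fin.le_last j')).ne
  refine Finset.ssubset_iff_subset_ne.2
    ⟨fun x => by simpa using fun hx : x.castSucc < j => hx.trans hjj', fun h => ?_⟩
  have : j.castPred hj ∈ ({x | x.castSucc < j'} : Finset (Fin n)) := by simpa using hjj'
  simp [← h] at this

section CardColoring

variable {α : Type*} [Fintype α] {r : ℕ} (ℓ : Fin r → ℕ)

-- `finSigmaFinEquiv.symm s` locates `s` among consecutive blocks of lengths `ℓ 0, ℓ 1, …`.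
def cardColoring (hα : Fintype.card α < ∑ i, ℓ i) (A : Finset α) : Fin r :=
  (finSigmaFinEquiv.symm ⟨#A, A.card_le_univ.trans_lt hα⟩).1

theorem HasChain.le_of_cardColoring {hα : Fintype.card α < ∑ i, ℓ i} {i : Fin r} {k : ℕ}
    (h : HasChain (fun A => cardColoring ℓ hα A = i) k) : k ≤ ℓ i := by
  obtain ⟨A, hA, hcol⟩ := h
  let σ (j : Fin k) : (i : Fin r) × Fin (ℓ i) :=
    finSigmaFinEquiv.symm ⟨#(A j), (A j).card_le_univ.trans_lt hα⟩
  have hσ : Function.Injective σ := fun j j' h => (Finset.card_strictMono.comp hA).injective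
    (Fin.mk.inj_iff.1 (finSigmaFinEquiv.symm.injective h))
  simpa using card_le_card_of_injOn σ (t := ({i} : Finset (Fin r)).sigma fun _ => univ)
    (s := univ) (fun j _ => by simpa [σ, cardColoring] using hcol j) hσ.injOn

end CardColoring

/-- `BR^1(B_{n 0}, C_{n 1}, …, C_{n t}) = n 0 + ∑_{i=1}^{t} (n i − 1)`:
the stated value is the least `N` such that every `(t+1)`-coloring of the elements
of the Boolean lattice `B_N` contains either a copy of the Boolean lattice `B_{n 0}`
in color `0`, or a chain of `n i` subsets all of color `i` for some `i ≥ 1`. -/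
theorem boolean_ramsey_boolean_vs_chains
    (t : ℕ) (n : Fin (t + 1) → ℕ) (hn : ∀ i, 1 ≤ n i) :
    IsLeast
      {N : ℕ | ∀ c : Finset (Fin N) → Fin (t + 1),
        (∃ f : Finset (Fin (n 0)) → Finset (Fin N),
            Function.Injective f ∧
            (∀ S T : Finset (Fin (n 0)), S ⊆ T → f S ⊆ f T) ∧
            (∀ S, c (f S) = 0)) ∨
        (∃ i : Fin t, ∃ A : Fin (n i.succ) → Finset (Fin N),
            StrictMono A ∧ ∀ j, c (A j) = i.succ)}
      (n 0 + ∑ i : Fin t, (n i.succ - 1)) := by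
  refine ⟨fun c => or_iff_not_imp_right.2 fun hchains => ?_, fun N hN => ?_⟩
  · have hnonzero : ¬ HasChain (fun A => c A ∈ univ.map (Fin.succEmb t))
        (∑ i : Fin t, (n i.succ - 1) + 1) := by
      intro h
      obtain ⟨_, hi, hchain⟩ := h.exists_fiber_of_sum_lt (fun i => n i - 1) (by simp)
      obtain ⟨i, -, rfl⟩ := mem_map.1 hi
      exact hchains ⟨i, hchain.of_le (Nat.sub_add_cancel (hn i.succ)).ge⟩
    obtain ⟨e, he⟩ := exists_orderEmbedding_avoiding_of_not_hasChain _ _ _ hnonzero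
    refine ⟨e, e.injective, fun _ _ h => e.monotone h, fun S => ?_⟩
    simpa [Fin.exists_succ_eq] using he S
  · by_contra! hlt
    let ℓ : Fin (t + 1) → ℕ := Fin.cons (n 0) fun i => n i.succ - 1
    have hℓ : Fintype.card (Fin N) < ∑ i, ℓ i := by simpa [ℓ, Fin.sum_univ_succ] using hlt
    rcases hN (cardColoring ℓ hℓ) with ⟨f, hf, hfmono, hcol⟩ | ⟨i, hchain⟩
    · have hf : StrictMono f := Monotone.strictMono_of_injective (fun S T h => hfmono S T h) hf
      have := ((hasChain_finset_fin (n 0)).map f hf fun S _ => hcol S).le_of_cardColoring ℓ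
      simp [ℓ] at this
    · have := HasChain.le_of_cardColoring ℓ hchain
      simp only [ℓ, Fin.cons_succ] at this
      have := hn i.succ
      omega
end

section
/- Let P_1, …, P_t be finite posets and let M be an integer such that every t-coloring of the elements of the Boolean lattice B_M contains a copy of P_i in color i for some i ∈ {1,…,t}. Then for all positive integers n_1, …, n_s, every (t+s)-coloring of the elements of B_{M + ∑_{j=1}^s (n_j − 1)} contains either a copy of P_i in color i for some i ∈ {1,…,t}, or a chain of n_j subsets all of color t+j for some j ∈ {1,…,s}. (That is, BR^1(P_1,…,P_t,C_{n_1},…,C_{n_s}) ≤ BR^1(P_1,…,P_t) + ∑_{j=1}^s (n_j − 1).) -/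
/-!
Let `L = ∑ j (n_j - 1)` and, for a set `S`, let `h(S)` be the sum over the chain colors `j` of the
length of the longest chain of color `j` below `S`. If there is no long chain then `h ≤ L`, and a
set of chain color `j` strictly raises the `j`-th summand above every proper subset. Embed `B_M`
into `B_{M+L}` by the layers `X ↦ X ∪ {M, …, M + k - 1}` and choose for each `X` the least
`k = k(X)` with `h(X ∪ {M, …, M + k - 1}) ≤ k`. Then `k` is monotone in `X`, and by minimality
the layer `k(X)` of `X` cannot have a chain color. Coloring `X` by the color of this layer gives a
`t`-coloring of `B_M`, and a copy of `P_i` for it lifts to a copy in `B_{M+L}`.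
-/

open Finset

section MonoHeight

variable {α γ : Type*} [PartialOrder α] (c : α → γ) (g : γ)

def HasMonoChainBelow (m : ℕ) (a : α) : Prop :=
  ∃ A : Fin m → α, StrictMono A ∧ (∀ l, c (A l) = g) ∧ ∀ l, A l ≤ a

open Classical in
noncomputable def monoHeight [Fintype α] (a : α) : ℕ :=
  Nat.findGreatest (HasMonoChainBelow c g · a) (Fintype.card α)

variable {c g}

lemma hasMonoChainBelow_zero (a : α) : HasMonoChainBelow c g 0 a :=
  ⟨Fin.elim0, fun x => x.elim0, fun l => l.elim0, fun l => l.elim0⟩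

lemma HasMonoChainBelow.mono {m m' : ℕ} {a b : α} (h : HasMonoChainBelow c g m a)
    (hm : m' ≤ m) (hab : a ≤ b) : HasMonoChainBelow c g m' b := by
  obtain ⟨A, hA, hAc, hAa⟩ := h
  exact ⟨A ∘ Fin.castLE hm, hA.comp (Fin.strictMono_castLE hm), fun l => hAc _,
    fun l => (hAa _).trans hab⟩

lemma strictMono_snoc {m : ℕ} {A : Fin m → α} (hA : StrictMono A) {b : α}
    (hAb : ∀ l, A l < b) : StrictMono (Fin.snoc (α := fun _ => α) A b) := by
  intro x y hxy
  induction y using Fin.lastCases with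
  | last =>
    induction x using Fin.lastCases with
    | last => exact absurd hxy (lt_irrefl _)
    | cast x => simpa using hAb x
  | cast y =>
    induction x using Fin.lastCases with
    | last => exact absurd hxy (not_lt.2 (Fin.le_last _))
    | cast x => simpa using hA (Fin.castSucc_lt_castSucc_iff.1 hxy)

lemma hasMonoChainBelow_snoc {m : ℕ} {A : Fin m → α} (hA : StrictMono A)
    (hAc : ∀ l, c (A l) = g) {b : α} (hAb : ∀ l, A l < b) (hb : c b = g) :
    HasMonoChainBelow c g (m + 1) b := by
  refine ⟨Fin.snoc (α := fun _ => α) A b, strictMono_snoc hA hAb, fun l => ?_, fun l => ?_⟩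
  · induction l using Fin.lastCases <;> simp [hb, hAc]
  · induction l using Fin.lastCases <;> simp [(hAb _).le]

variable [Fintype α]

lemma HasMonoChainBelow.le_card {m : ℕ} {a : α} (h : HasMonoChainBelow c g m a) :
    m ≤ Fintype.card α := by
  obtain ⟨A, hA, -, -⟩ := h
  simpa using Fintype.card_le_of_injective A hA.injective

lemma hasMonoChainBelow_monoHeight (a : α) : HasMonoChainBelow c g (monoHeight c g a) a := by
  classical
  exact Nat.findGreatest_spec (P := (HasMonoChainBelow c g · a)) (Nat.zero_le _)
    (hasMonoChainBelow_zero a)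

lemma HasMonoChainBelow.le_monoHeight {m : ℕ} {a : α} (h : HasMonoChainBelow c g m a) :
    m ≤ monoHeight c g a := by
  classical
  exact Nat.le_findGreatest h.le_card h

lemma monoHeight_mono : Monotone (monoHeight c g) := fun _ _ hab =>
  ((hasMonoChainBelow_monoHeight _).mono le_rfl hab).le_monoHeight

lemma monoHeight_pos {b : α} (hb : c b = g) : 0 < monoHeight c g b :=
  (hasMonoChainBelow_snoc (A := Fin.elim0) (fun x => x.elim0) (fun l => l.elim0)
    (fun l => l.elim0) hb).le_monoHeight

lemma monoHeight_lt_of_lt {a b : α} (hb : c b = g) (hab : a < b) :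
    monoHeight c g a < monoHeight c g b := by
  obtain ⟨A, hA, hAc, hAa⟩ := hasMonoChainBelow_monoHeight (c := c) (g := g) a
  exact (hasMonoChainBelow_snoc hA hAc (fun l => (hAa l).trans_lt hab) hb).le_monoHeight

lemma monoHeight_le_pred {n : ℕ} (h : ¬ ∃ A : Fin n → α, StrictMono A ∧ ∀ l, c (A l) = g)
    (a : α) : monoHeight c g a ≤ n - 1 := by
  by_contra! hn
  obtain ⟨A, hA, hAc, -⟩ := (hasMonoChainBelow_monoHeight (c := c) (g := g) a).mono (by omega : n ≤ _) le_rfl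
  exact h ⟨A, hA, hAc⟩

end MonoHeight

section Layers

variable {α ι κ : Type*} [PartialOrder α] [Fintype α] [Fintype κ]

noncomputable def totalChainHeight (c : α → ι ⊕ κ) (a : α) : ℕ :=
  ∑ j, monoHeight c (Sum.inr j) a

variable {c : α → ι ⊕ κ}

lemma totalChainHeight_mono : Monotone (totalChainHeight c) := fun _ _ hab =>
  sum_le_sum fun _ _ => monoHeight_mono hab

lemma totalChainHeight_pos {b : α} {j : κ} (hb : c b = Sum.inr j) : 0 < totalChainHeight c b :=
  (monoHeight_pos hb).trans_le <|
    single_le_sum (f := fun j' => monoHeight c (Sum.inr j') b) (fun _ _ => Nat.zero_le _) (mem_univ j)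

lemma totalChainHeight_lt_of_lt {a b : α} {j : κ} (hb : c b = Sum.inr j) (hab : a < b) :
    totalChainHeight c a < totalChainHeight c b :=
  sum_lt_sum (fun _ _ => monoHeight_mono hab.le) ⟨j, mem_univ j, monoHeight_lt_of_lt hb hab⟩

theorem exists_monotone_layer_coloring {β : Type*} [Preorder β] (E : β → ℕ → α) (L : ℕ)
    (hE : ∀ ⦃X Y k l⦄, X ≤ Y → k ≤ l → E X k ≤ E Y l)
    (hE_succ : ∀ X k, k < L → E X k < E X (k + 1))
    (hL : ∀ a, totalChainHeight c a ≤ L) :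
    ∃ (k : β → ℕ) (c' : β → ι), Monotone k ∧ ∀ X, c (E X (k X)) = Sum.inl (c' X) := by
  have hex : ∀ X, ∃ k, totalChainHeight c (E X k) ≤ k := fun X => ⟨L, hL _⟩
  set k : β → ℕ := fun X => Nat.find (hex X)
  have hkL : ∀ X, k X ≤ L := fun X => Nat.find_min' _ (hL _)
  have hk_mono : Monotone k := fun X Y hXY =>
    Nat.find_min' _ ((totalChainHeight_mono (hE hXY le_rfl)).trans (Nat.find_spec (hex Y)))
  have hcol : ∀ X, ∃ i, c (E X (k X)) = Sum.inl i := by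
    intro X
    rcases hc : c (E X (k X)) with i | j
    · exact ⟨i, rfl⟩
    have hspec : totalChainHeight c (E X (k X)) ≤ k X := Nat.find_spec (hex X)
    -- By minimality the height at layer `k - 1` exceeds `k - 1`, and layer `k` adds to it.
    rcases hkX : k X with _ | k'
    · have := totalChainHeight_pos hc
      omega
    · have hmin : k' < totalChainHeight c (E X k') :=
        not_le.1 (Nat.find_min (hex X) (by omega : k' < k X))
      have hlt := totalChainHeight_lt_of_lt hc (hkX ▸ hE_succ X k' (by have := hkL X; omega))
      omega
  choose c' hc' using hcol
  exact ⟨k, c', hk_mono, hc'⟩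

end Layers

def layer (M L : ℕ) (X : Finset (Fin M)) (k : ℕ) : Finset (Fin (M + L)) :=
  (X.disjSum {i : Fin L | (i : ℕ) < k}).map finSumFinEquiv.toEmbedding

lemma layer_mono {M L : ℕ} ⦃X Y : Finset (Fin M)⦄ ⦃k l : ℕ⦄ (hXY : X ≤ Y) (hkl : k ≤ l) :
    layer M L X k ≤ layer M L Y l :=
  map_subset_map.2 <| disjSum_mono hXY fun i hi => by
    simp only [mem_filter, mem_univ, true_and] at hi ⊢; omega

lemma layer_lt_succ {M L : ℕ} (X : Finset (Fin M)) {k : ℕ} (hk : k < L) :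
    layer M L X k < layer M L X (k + 1) := by
  refine map_ssubset_map.2 <| disjSum_ssubset_disjSum_of_subset_of_ssubset subset_rfl ?_
  refine ssubset_iff_of_subset (fun i hi => by
    simp only [mem_filter, mem_univ, true_and] at hi ⊢; omega) |>.2 ⟨⟨k, hk⟩, ?_⟩
  simp

lemma layer_injective {M L : ℕ} {X Y : Finset (Fin M)} {k l : ℕ}
    (h : layer M L X k = layer M L Y l) : X = Y :=
  (disjSum_inj.1 (map_injective _ h)).1

theorem boolean_ramsey_append_chains_general
    (t s : ℕ) (P : Fin t → Type) [∀ i, PartialOrder (P i)]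
    (M : ℕ)
    (hM : ∀ c : Finset (Fin M) → Fin t,
      ∃ (i : Fin t) (f : P i → Finset (Fin M)),
        Function.Injective f ∧
        (∀ x y : P i, x ≤ y → f x ⊆ f y) ∧
        (∀ x : P i, c (f x) = i))
    (nn : Fin s → ℕ) :
    ∀ c : Finset (Fin (M + ∑ j, (nn j - 1))) → (Fin t ⊕ Fin s),
      (∃ (i : Fin t) (f : P i → Finset (Fin (M + ∑ j, (nn j - 1)))),
        Function.Injective f ∧
        (∀ x y : P i, x ≤ y → f x ⊆ f y) ∧
        (∀ x : P i, c (f x) = Sum.inl i)) ∨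
      (∃ (j : Fin s) (A : Fin (nn j) → Finset (Fin (M + ∑ j, (nn j - 1)))),
        StrictMono A ∧ ∀ l, c (A l) = Sum.inr j) := by
  intro c
  refine or_iff_not_imp_right.2 fun hchain => ?_
  have hL : ∀ a, totalChainHeight c a ≤ ∑ j, (nn j - 1) := fun a =>
    sum_le_sum fun j _ => monoHeight_le_pred (fun h => hchain ⟨j, h⟩) a
  obtain ⟨k, c', hk, hc'⟩ :=
    exists_monotone_layer_coloring (layer M _) _ layer_mono (fun X _ => layer_lt_succ X) hL
  obtain ⟨i, f, hf_inj, hf_mono, hf_col⟩ := hM c'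
  refine ⟨i, fun x => layer M _ (f x) (k (f x)), fun x y h => hf_inj (layer_injective h),
    fun x y h => layer_mono (hf_mono x y h) (hk (hf_mono x y h)), fun x => ?_⟩
  rw [hc', hf_col]

/-- `BR^1(P_1,…,P_t,C_{n_1},…,C_{n_s}) ≤ BR^1(P_1,…,P_t) + ∑_j (n_j − 1)`.
If every `t`-coloring of `B_M` contains a copy of `P i` in color `i` for some `i`,
then every `(t+s)`-coloring (colors `Sum.inl i` and `Sum.inr j`) of
`B_{M + ∑_j (n_j − 1)}` contains a copy of `P i` in color `inl i` for some `i`,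
or a chain of `nn j` subsets all of color `inr j` for some `j`. -/
theorem boolean_ramsey_append_chains
    (t s : ℕ) (P : Fin t → Type) [∀ i, PartialOrder (P i)] [∀ i, Fintype (P i)]
    (M : ℕ)
    (hM : ∀ c : Finset (Fin M) → Fin t,
      ∃ (i : Fin t) (f : P i → Finset (Fin M)),
        Function.Injective f ∧
        (∀ x y : P i, x ≤ y → f x ⊆ f y) ∧
        (∀ x : P i, c (f x) = i))
    (nn : Fin s → ℕ) (hnn : ∀ j, 1 ≤ nn j) :
    ∀ c : Finset (Fin (M + ∑ j, (nn j - 1))) → (Fin t ⊕ Fin s),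
      (∃ (i : Fin t) (f : P i → Finset (Fin (M + ∑ j, (nn j - 1)))),
        Function.Injective f ∧
        (∀ x y : P i, x ≤ y → f x ⊆ f y) ∧
        (∀ x : P i, c (f x) = Sum.inl i)) ∨
      (∃ (j : Fin s) (A : Fin (nn j) → Finset (Fin (M + ∑ j, (nn j - 1)))),
        StrictMono A ∧ ∀ l, c (A l) = Sum.inr j) :=
  boolean_ramsey_append_chains_general t s P M hM nn
end

section
/- Let P_1, …, P_t be finite posets, n a positive integer, and L_1, …, L_t real numbers such that for each i, every P_i-free family F of subsets of {1,…,n} satisfies lu_n(F) = ∑_{F∈F} 1/binom(n,|F|) ≤ L_i. If ∑_{i=1}^t L_i < n + 1, then every t-coloring of the elements of the Boolean lattice B_n contains a copy of P_i in color i for some i ∈ {1,…,t}. -/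
/-!
Each of the `n + 1` layers of `B_n` has Lubell mass exactly `1`, so the whole cube has Lubell
mass `n + 1`. If some coloring had no copy of `P i` in color `i` for every `i`, each colour class
would be `P i`-free, hence of Lubell mass at most `L i`, and summing over the colours would give
`n + 1 ≤ ∑ i, L i`.
-/

open Finset

theorem sum_powerset_one_div_choose_card {α : Type*} (s : Finset α) :
    ∑ u ∈ s.powerset, (1 : ℝ) / (#s).choose #u = #s + 1 := by
  rw [sum_powerset_apply_card fun k => (1 : ℝ) / (#s).choose k]
  have layer : ∀ k ∈ range (#s + 1), (#s).choose k • ((1 : ℝ) / (#s).choose k) = 1 := by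
    intro k hk
    have hpos : ((#s).choose k : ℝ) ≠ 0 :=
      Nat.cast_ne_zero.2 (Nat.choose_pos (Nat.lt_succ_iff.1 (mem_range.1 hk))).ne'
    rw [nsmul_eq_mul, mul_one_div_cancel hpos]
  rw [sum_congr rfl layer, sum_const, card_range, nsmul_one]
  push_cast
  ring

theorem boolean_ramsey_lubell_bound_general
    (t n : ℕ)
    (P : Fin t → Type) [∀ i, PartialOrder (P i)]
    (L : Fin t → ℝ)
    (hL : ∀ (i : Fin t) (𝓕 : Finset (Finset (Fin n))),
      (¬ ∃ f : P i → Finset (Fin n),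
          Function.Injective f ∧
          (∀ x y : P i, x ≤ y → f x ⊆ f y) ∧
          (∀ x : P i, f x ∈ 𝓕)) →
      ∑ F ∈ 𝓕, (1 : ℝ) / (n.choose F.card) ≤ L i)
    (hsum : ∑ i, L i < n + 1) :
    ∀ c : Finset (Fin n) → Fin t,
      ∃ (i : Fin t) (f : P i → Finset (Fin n)),
        Function.Injective f ∧
        (∀ x y : P i, x ≤ y → f x ⊆ f y) ∧
        (∀ x : P i, c (f x) = i) := by
  intro c
  by_contra! hfree
  have class_bound : ∀ i, ∑ F ∈ univ.filter (c · = i), (1 : ℝ) / n.choose F.card ≤ L i := by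
    refine fun i => hL i _ fun ⟨f, hinj, hmono, hmem⟩ => ?_
    obtain ⟨x, hx⟩ := hfree i f hinj hmono
    exact hx (mem_filter.1 (hmem x)).2
  have cube_mass := sum_powerset_one_div_choose_card (univ : Finset (Fin n))
  rw [powerset_univ, card_univ, Fintype.card_fin, ← sum_fiberwise univ c] at cube_mass
  have cube_mass_le := sum_le_sum fun i (_ : i ∈ univ) => class_bound i
  linarith

/-- the Lubell-function bound for 1-uniform Boolean Ramsey numbers.
If for each `i`, every `P i`-free family `𝓕` of subsets of `{1,…,n}` satisfies
`lu_n(𝓕) = ∑_{F ∈ 𝓕} 1/(n choose |F|) ≤ L i`, and `∑ i, L i < n + 1`, then every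
`t`-coloring of the elements of the Boolean lattice `B_n` contains a copy of
`P i` in color `i` for some `i`. -/
theorem boolean_ramsey_lubell_bound
    (t n : ℕ) (hn : 1 ≤ n)
    (P : Fin t → Type) [∀ i, PartialOrder (P i)] [∀ i, Fintype (P i)]
    (L : Fin t → ℝ)
    (hL : ∀ (i : Fin t) (𝓕 : Finset (Finset (Fin n))),
      (¬ ∃ f : P i → Finset (Fin n),
          Function.Injective f ∧
          (∀ x y : P i, x ≤ y → f x ⊆ f y) ∧
          (∀ x : P i, f x ∈ 𝓕)) →
      ∑ F ∈ 𝓕, (1 : ℝ) / (n.choose F.card) ≤ L i)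
    (hsum : ∑ i, L i < n + 1) :
    ∀ c : Finset (Fin n) → Fin t,
      ∃ (i : Fin t) (f : P i → Finset (Fin n)),
        Function.Injective f ∧
        (∀ x y : P i, x ≤ y → f x ⊆ f y) ∧
        (∀ x : P i, c (f x) = i) :=
  boolean_ramsey_lubell_bound_general t n P L hL hsum
end

section
/- Let r ≥ 1 be an integer, let m = ⌈log_2(r+2)⌉, and suppose 2^{m−1} − 1 ≤ r ≤ 2^m − binom(m, ⌊m/2⌋) − 1. Then for every t ≥ 1, the least integer N such that every t-coloring of the elements of the Boolean lattice B_N contains a monochromatic copy of the r-diamond poset is exactly tm. (That is, BR^1_t(⋄_r) = tm.) -/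
/-!
A permutation of `Fin n` encodes a maximal chain of `B_n`. If a family `F` contains no
`r`-diamond, sort the chains meeting `F` by their lowest and highest members `A ⊂ C` of `F`.
Permuting the `d = |C| - |A|` positions between `A` and `C` preserves this class, and averaging
over these `d!` permutations shows that a chain of the class meets on average
`∑ 1 / C(d, |X| - |A|)` sets strictly between `A` and `C`, summed over the fewer than `r` members
`X` of `F` there. Filling the lightest levels first bounds this by `m - 2` when
`r ≤ 2^m - C(m, ⌊m/2⌋) - 1`, so `F` meets at most `m` sets of an average maximal chain. As every
maximal chain of `B_{tm}` has `tm + 1 > t · m` sets, some colour class of a `t`-colouring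
contains an `r`-diamond.

Conversely, for `N < tm` colour `S` by `⌊|S| / m⌋`: a monochromatic interval `[A, C]` has
`|C| - |A| ≤ m - 1`, hence at most `2^(m-1) - 2 < r` sets strictly inside.
-/

open Finset Equiv Nat

namespace Nat

theorem choose_le_choose_of_le_of_le_sub {d i j : ℕ} (hij : i ≤ j) (hjd : j ≤ d - i) :
    d.choose i ≤ d.choose j := by
  wlog hj : j ≤ d / 2 generalizing j
  · rw [← choose_symm (by omega : j ≤ d)]
    exact this (by omega) (by omega) (by omega)
  induction j, hij using Nat.le_induction with
  | base => rfl
  | succ k _ ih =>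
    exact (ih (by omega) (by omega)).trans (choose_le_succ_of_lt_half_left (by omega))

theorem two_pow_eq_two_mul_sum_choose_add (m : ℕ) :
    2 ^ m = 2 * ∑ j ∈ range (m / 2), m.choose j + (m % 2 + 1) * m.choose (m / 2) := by
  set h := m / 2
  have hhigh : ∑ j ∈ Ico (m + 1 - h) (m + 1), m.choose j = ∑ j ∈ range h, m.choose j := by
    have := sum_Ico_reflect m.choose 0 (show h ≤ m + 1 by omega)
    rw [Nat.sub_zero] at this
    rw [← this, range_eq_Ico]
    exact sum_congr rfl fun j hj => choose_symm (by simp at hj; omega)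
  have hmid : ∑ j ∈ Ico h (m + 1 - h), m.choose j = (m % 2 + 1) * m.choose h :=
    calc ∑ j ∈ Ico h (m + 1 - h), m.choose j = ∑ j ∈ Ico h (m + 1 - h), m.choose h := by
          refine sum_congr rfl fun j hj => ?_
          rw [mem_Ico] at hj
          rcases (by omega : j = h ∨ j = m - h) with rfl | rfl
          · rfl
          · exact choose_symm (by omega)
      _ = (m % 2 + 1) * m.choose h := by
          rw [sum_const, Nat.card_Ico, smul_eq_mul]; congr 1; omega
  rw [← sum_range_choose, range_eq_Ico,
    ← sum_Ico_consecutive _ (Nat.zero_le h) (by omega : h ≤ m + 1),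
    ← sum_Ico_consecutive _ (by omega : h ≤ m + 1 - h) (by omega : m + 1 - h ≤ m + 1), hhigh,
    hmid, range_eq_Ico]
  ring

end Nat

theorem div_sub_div_le_one_sub_div {K : Type*} [Field K] [LinearOrder K] [IsStrictOrderedRing K]
    {g c M : K} (hgc : g ≤ c) (hc : 0 < c) (hcM : c ≤ M) : g / c - g / M ≤ 1 - c / M := by
  have := div_le_div_of_nonneg_left (sub_nonneg.2 hgc) hc hcM
  rw [sub_div, sub_div, div_self hc.ne'] at this
  linarith

/-- Levels `j` of `B_d` with `C(d, j) < C(d, h)` contribute at most `1` each; the remaining sets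
are charged `1 / C(d, h)` apiece. -/
theorem sum_div_choose_le_div_central_add {d h : ℕ} (hh : 1 ≤ h) (hhd : 2 * h ≤ d) {g : ℕ → ℕ}
    (hg : ∀ j, g j ≤ d.choose j) :
    ∑ j ∈ Ico 1 d, (g j : ℚ) / d.choose j ≤ (∑ j ∈ Ico 1 d, (g j : ℚ)) / d.choose h
      + 2 * ∑ j ∈ Ico 1 h, (1 - (d.choose j : ℚ) / d.choose h) := by
  have hM : (0 : ℚ) < d.choose h := mod_cast choose_pos (by omega)
  have houter : ∀ j, j ≤ d → (j < h ∨ d - h < j) →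
      (g j : ℚ) / d.choose j - g j / d.choose h ≤ 1 - (d.choose j : ℚ) / d.choose h := by
    intro j hjd hj
    refine div_sub_div_le_one_sub_div (mod_cast hg j) (mod_cast choose_pos hjd) ?_
    rcases hj with hj | hj
    · exact_mod_cast choose_le_choose_of_le_of_le_sub (d := d) (by omega) (by omega)
    · rw [← choose_symm hjd]
      exact_mod_cast choose_le_choose_of_le_of_le_sub (d := d) (by omega) (by omega)
  have hinner : ∀ j, h ≤ j → j ≤ d - h → (g j : ℚ) / d.choose j - g j / d.choose h ≤ 0 :=
    fun j hj hjd => sub_nonpos.2 <| div_le_div_of_nonneg_left (Nat.cast_nonneg _) hM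
      (mod_cast choose_le_choose_of_le_of_le_sub hj hjd)
  have hreflect : ∑ j ∈ Ico (d + 1 - h) d, (1 - (d.choose j : ℚ) / d.choose h)
      = ∑ j ∈ Ico 1 h, (1 - (d.choose j : ℚ) / d.choose h) := by
    have := sum_Ico_reflect (fun j => 1 - (d.choose j : ℚ) / d.choose h) 1
      (show h ≤ d + 1 by omega)
    rw [Nat.add_sub_cancel] at this
    rw [← this]
    exact sum_congr rfl fun j hj => by rw [choose_symm (by simp at hj; omega)]
  rw [sum_div, ← sub_le_iff_le_add', ← sum_sub_distrib,
    ← sum_Ico_consecutive _ (by omega : 1 ≤ d + 1 - h) (by omega : d + 1 - h ≤ d),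
    ← sum_Ico_consecutive _ hh (by omega : h ≤ d + 1 - h)]
  have hlow := sum_le_sum fun j (hj : j ∈ Ico 1 h) =>
    houter j (by simp at hj; omega) (by simp at hj; omega)
  have hmid := sum_nonpos fun j (hj : j ∈ Ico h (d + 1 - h)) =>
    hinner j (by simp at hj; omega) (by simp at hj; omega)
  have hhigh := sum_le_sum fun j (hj : j ∈ Ico (d + 1 - h) d) =>
    houter j (by simp at hj; omega) (by simp at hj; omega)
  rw [hreflect] at hhigh
  linarith

theorem sum_div_choose_le {m d : ℕ} (hm : 2 ≤ m) {g : ℕ → ℕ} (hg : ∀ j, g j ≤ d.choose j)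
    (hsum : ∑ j ∈ Ico 1 d, g j + m.choose (m / 2) + 2 ≤ 2 ^ m) :
    ∑ j ∈ Ico 1 d, (g j : ℚ) / d.choose j ≤ m - 2 := by
  have hm2 : ((m - 2 : ℕ) : ℚ) = m - 2 := by push_cast [Nat.cast_sub hm]; ring
  rcases lt_or_ge d m with hdm | hmd
  · calc ∑ j ∈ Ico 1 d, (g j : ℚ) / d.choose j ≤ ∑ j ∈ Ico 1 d, (1 : ℚ) :=
          sum_le_sum fun j _ => div_le_one_of_le₀ (mod_cast hg j) (Nat.cast_nonneg _)
      _ ≤ m - 2 := by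
          rw [sum_const, Nat.card_Ico, nsmul_eq_mul, mul_one, ← hm2]
          exact_mod_cast (by omega : d - 1 ≤ m - 2)
  set h := m / 2
  have hM : (0 : ℚ) < d.choose h := mod_cast choose_pos (by omega)
  have hg_sum : ∑ j ∈ Ico 1 d, g j ≤ m % 2 * d.choose h + 2 * ∑ j ∈ Ico 1 h, d.choose j := by
    have hpow := two_pow_eq_two_mul_sum_choose_add m
    rw [range_eq_Ico, sum_eq_sum_Ico_succ_bot (by omega), choose_zero_right, zero_add] at hpow
    have h₁ : ∑ j ∈ Ico 1 h, m.choose j ≤ ∑ j ∈ Ico 1 h, d.choose j :=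
      sum_le_sum fun j _ => choose_le_choose j hmd
    have h₂ := Nat.mul_le_mul_left (m % 2) (choose_le_choose h hmd)
    nlinarith
  have hg_sum' : (∑ j ∈ Ico 1 d, (g j : ℚ)) / d.choose h
      ≤ (m % 2 : ℕ) + 2 * ((∑ j ∈ Ico 1 h, (d.choose j : ℚ)) / d.choose h) := by
    rw [div_le_iff₀ hM, add_mul, mul_assoc, div_mul_cancel₀ _ hM.ne']
    exact_mod_cast hg_sum
  have hm_split : (m : ℚ) = 2 * h + (m % 2 : ℕ) := by exact_mod_cast (Nat.div_add_mod m 2).symm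
  have := sum_div_choose_le_div_central_add (h := h) (by omega) (by omega) hg
  rw [sum_sub_distrib, sum_const, Nat.card_Ico, nsmul_eq_mul, mul_one, ← sum_div] at this
  rw [hm_split]
  push_cast [Nat.cast_sub (by omega : 1 ≤ h)] at this ⊢
  linarith

theorem card_filter_card_sub_eq_le_choose {α : Type*} [DecidableEq α] {A C : Finset α}
    (hAC : A ⊆ C) {G : Finset (Finset α)} (hG : ∀ X ∈ G, A ⊆ X ∧ X ⊆ C) (j : ℕ) :
    #{X ∈ G | #X - #A = j} ≤ (#C - #A).choose j :=
  calc #{X ∈ G | #X - #A = j} ≤ #((C \ A).powersetCard j) := by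
        refine card_le_card_of_injOn (· \ A) (fun X hX => ?_) (fun X hX Y hY hXY => ?_)
        · rw [coe_filter] at hX
          rw [mem_coe, mem_powersetCard, card_sdiff_of_subset (hG X hX.1).1, hX.2]
          exact ⟨sdiff_subset_sdiff (hG X hX.1).2 subset_rfl, rfl⟩
        · rw [coe_filter] at hX hY
          rw [← union_sdiff_of_subset (hG X hX.1).1, ← union_sdiff_of_subset (hG Y hY.1).1]
          exact congrArg (A ∪ ·) hXY
    _ = (#C - #A).choose j := by rw [card_powersetCard, card_sdiff_of_subset hAC]

theorem sum_factorial_mul_factorial_le {α : Type*} [DecidableEq α] {m : ℕ} (hm : 2 ≤ m)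
    {A C : Finset α} {G : Finset (Finset α)} (hG : ∀ X ∈ G, A ⊂ X ∧ X ⊂ C)
    (hcard : #G + m.choose (m / 2) + 2 ≤ 2 ^ m) :
    ∑ X ∈ G, (#X - #A)! * (#C - #X)! ≤ (m - 2) * (#C - #A)! := by
  rcases G.eq_empty_or_nonempty with rfl | ⟨X₀, hX₀⟩
  · simp
  set d := #C - #A
  set g : ℕ → ℕ := fun j => #{X ∈ G | #X - #A = j}
  have hg : ∀ j, g j ≤ d.choose j :=
    card_filter_card_sub_eq_le_choose ((hG X₀ hX₀).1.trans (hG X₀ hX₀).2).subset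
      fun X hX => ⟨(hG X hX).1.subset, (hG X hX).2.subset⟩
  have hlevel : ∀ X ∈ G, #X - #A ∈ Ico 1 d := fun X hX => by
    have := card_lt_card (hG X hX).1
    have := card_lt_card (hG X hX).2
    rw [mem_Ico]; omega
  have hsum : ∑ X ∈ G, (#X - #A)! * (#C - #X)! = ∑ j ∈ Ico 1 d, g j * (j ! * (d - j)!) := by
    rw [← sum_fiberwise_of_maps_to hlevel]
    refine sum_congr rfl fun j _ => sum_const_nat fun X hX => ?_
    rw [mem_filter] at hX
    have := card_lt_card (hG X hX.1).1
    have := card_lt_card (hG X hX.1).2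
    rw [← hX.2]; congr 2; omega
  have hweight : ∀ j ∈ Ico 1 d,
      ((g j * (j ! * (d - j)!) : ℕ) : ℚ) = d ! * (g j / d.choose j) := by
    intro j hj
    have hjd : j ≤ d := by simp at hj; omega
    have hC : (d.choose j : ℚ) ≠ 0 := mod_cast (choose_pos hjd).ne'
    rw [← choose_mul_factorial_mul_factorial hjd]; push_cast; field_simp
  have hcount : ∑ j ∈ Ico 1 d, g j = #G := (card_eq_sum_card_fiberwise hlevel).symm
  have hbound := sum_div_choose_le hm hg (by omega)
  rw [hsum, ← Nat.cast_le (α := ℚ), Nat.cast_sum, sum_congr rfl hweight, ← mul_sum]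
  push_cast [Nat.cast_sub hm]
  nlinarith [(d !).cast_nonneg (α := ℚ)]

theorem Fin.card_filter_le_val_lt {n a c : ℕ} (hac : a ≤ c) (hc : c ≤ n) :
    #{i : Fin n | a ≤ (i : ℕ) ∧ (i : ℕ) < c} = c - a := by
  have : univ.filter (fun i : Fin n => a ≤ (i : ℕ) ∧ (i : ℕ) < c)
      = univ.filter (fun i : Fin n => (i : ℕ) < c)
        \ univ.filter (fun i : Fin n => (i : ℕ) < a) := by
    ext i; simp only [mem_filter, mem_sdiff, mem_univ, true_and, not_lt]; tauto
  rw [this, card_sdiff_of_subset (fun i => by simp only [mem_filter, mem_univ, true_and]; omega),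
    Fin.card_filter_val_lt, Fin.card_filter_val_lt]
  omega

/-- Any two permutations carrying `S` onto `T` differ by a permutation stabilising `T`. -/
theorem Equiv.Perm.card_filter_forall_mem_iff_le {β : Type*} [Fintype β] [DecidableEq β]
    (S T : Finset β) :
    #{f : Perm β | ∀ x, f x ∈ T ↔ x ∈ S} ≤ (#T)! * (Fintype.card β - #T)! := by
  rcases eq_empty_or_nonempty {f : Perm β | ∀ x, f x ∈ T ↔ x ∈ S} with h | ⟨f₀, hf₀⟩
  · simp [h]
  rw [mem_filter] at hf₀
  set p : β → Bool := fun x => decide (x ∈ T)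
  calc #{f : Perm β | ∀ x, f x ∈ T ↔ x ∈ S} ≤ #{g : Perm β | p ∘ g = p} := by
        refine card_le_card_of_injOn (· * f₀⁻¹) (fun f hf => ?_)
          fun f _ g _ h => mul_right_cancel h
        simp only [coe_filter, mem_univ, true_and, Set.mem_ofPred_eq] at hf ⊢
        funext x
        simpa [p, hf] using (hf₀.2 (f₀⁻¹ x)).symm
    _ = ∏ b, (Fintype.card {x // p x = b})! := by
        rw [← DomMulAct.stabilizer_card, Fintype.card_subtype]
    _ = (#T)! * (Fintype.card β - #T)! := by
        rw [Fintype.prod_bool]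
        simp [p, Fintype.card_subtype, filter_not, card_sdiff_of_subset]

section Chains

variable {n : ℕ}

/-- `σ` encodes the maximal chain `chainSet σ 0 ⊂ chainSet σ 1 ⊂ ⋯ ⊂ chainSet σ n` of `B_n`:
the element `e` enters at position `σ e`. -/
def chainSet (σ : Perm (Fin n)) (k : ℕ) : Finset (Fin n) := {e | (σ e : ℕ) < k}

@[simp]
theorem mem_chainSet {σ : Perm (Fin n)} {k : ℕ} {e : Fin n} :
    e ∈ chainSet σ k ↔ (σ e : ℕ) < k := by
  simp [chainSet]

theorem chainSet_mono (σ : Perm (Fin n)) {k l : ℕ} (h : k ≤ l) : chainSet σ k ⊆ chainSet σ l :=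
  fun e he => by rw [mem_chainSet] at *; omega

theorem card_chainSet (σ : Perm (Fin n)) {k : ℕ} (hk : k ≤ n) : #(chainSet σ k) = k := by
  have : chainSet σ k = ({i : Fin n | (i : ℕ) < k} : Finset (Fin n)).map σ.symm.toEmbedding := by
    ext e; simp
  rw [this, card_map, Fin.card_filter_val_lt, min_eq_right hk]

theorem chainSet_ssubset_chainSet (σ : Perm (Fin n)) {k l : ℕ} (hkl : k < l) (hl : l ≤ n) :
    chainSet σ k ⊂ chainSet σ l :=
  ssubset_of_subset_of_ne (chainSet_mono σ hkl.le) fun h => by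
    have := congrArg card h
    rw [card_chainSet σ (by omega), card_chainSet σ hl] at this
    omega

/-- The positions `a, …, c - 1`: permuting them moves a chain only strictly between its sets
number `a` and `c`. -/
abbrev Window (n a c : ℕ) : Type := {i : Fin n // a ≤ (i : ℕ) ∧ (i : ℕ) < c}

theorem card_perm_window {a c : ℕ} (hac : a ≤ c) (hc : c ≤ n) :
    Fintype.card (Perm (Window n a c)) = (c - a)! := by
  rw [Fintype.card_perm, Fintype.card_subtype, Fin.card_filter_le_val_lt hac hc]

theorem chainSet_ofSubtype_mul {a c k : ℕ} (f : Perm (Window n a c)) (σ : Perm (Fin n))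
    (hk : k ≤ a ∨ c ≤ k) : chainSet (Perm.ofSubtype f * σ) k = chainSet σ k := by
  ext e
  simp only [mem_chainSet, Perm.mul_apply]
  by_cases hi : a ≤ (σ e : ℕ) ∧ (σ e : ℕ) < c
  · have := (f ⟨σ e, hi⟩).2
    rw [Perm.ofSubtype_apply_of_mem f hi]
    omega
  · rw [Perm.ofSubtype_apply_of_not_mem f hi]

theorem card_filter_chainSet_ofSubtype_mul_eq_le {a c k : ℕ} (σ : Perm (Fin n))
    (X : Finset (Fin n)) (hak : a ≤ k) (hkc : k ≤ c) (hc : c ≤ n) :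
    #{f : Perm (Window n a c) | chainSet (Perm.ofSubtype f * σ) k = X}
      ≤ (k - a)! * (c - k)! := by
  set S : Finset (Window n a c) := {i | σ.symm i ∈ X}
  set T : Finset (Window n a c) := {i | (i : ℕ) < k}
  have hT : #T = k - a := by
    rw [← Fin.card_filter_le_val_lt hak (hkc.trans hc), ← card_map (Function.Embedding.subtype _)]
    congr 1; ext i; simp [T]; omega
  calc #{f : Perm (Window n a c) | chainSet (Perm.ofSubtype f * σ) k = X}
      ≤ #{f : Perm (Window n a c) | ∀ i, f i ∈ T ↔ i ∈ S} := by
        refine card_le_card fun f hf => ?_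
        simp only [mem_filter, mem_univ, true_and] at hf ⊢
        intro i
        simp [S, T, ← hf, Perm.ofSubtype_apply_coe]
    _ ≤ (k - a)! * (c - k)! := by
        refine (Perm.card_filter_forall_mem_iff_le _ _).trans_eq ?_
        rw [hT, Fintype.card_subtype, Fin.card_filter_le_val_lt (hak.trans hkc) hc]
        congr 2; omega

end Chains

def strictlyBetween {α : Type*} [DecidableEq α] (F : Finset (Finset α)) (A C : Finset α) :
    Finset (Finset α) :=
  {X ∈ F | A ⊂ X ∧ X ⊂ C}

def DiamondFree {α : Type*} [DecidableEq α] (r : ℕ) (F : Finset (Finset α)) : Prop :=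
  ∀ A ∈ F, ∀ C ∈ F, A ⊂ C → #(strictlyBetween F A C) < r

theorem exists_diamond_of_not_diamondFree {α : Type*} [DecidableEq α] {r : ℕ}
    {F : Finset (Finset α)} (hF : ¬ DiamondFree r F) :
    ∃ (A C : Finset α) (B : Fin r → Finset α), Function.Injective B ∧
      (∀ k, A ⊂ B k ∧ B k ⊂ C) ∧ A ∈ F ∧ C ∈ F ∧ ∀ k, B k ∈ F := by
  simp only [DiamondFree, not_forall, not_lt] at hF
  obtain ⟨A, hA, C, hC, -, hr⟩ := hF
  obtain ⟨B⟩ := Function.Embedding.nonempty_of_card_le (α := Fin r)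
    (β := strictlyBetween F A C) (by simpa using hr)
  have hB (k : Fin r) : (B k : Finset α) ∈ F ∧ A ⊂ B k ∧ (B k : Finset α) ⊂ C :=
    mem_filter.1 (B k).2
  exact ⟨A, C, fun k => B k, Subtype.val_injective.comp B.injective, fun k => (hB k).2, hA, hC,
    fun k => (hB k).1⟩

section Lubell

variable {n : ℕ} {F : Finset (Finset (Fin n))}

theorem card_filter_Ioo_chainSet_mem {A C : Finset (Fin n)} {τ : Perm (Fin n)}
    (hA : chainSet τ #A = A) (hC : chainSet τ #C = C) :
    #{k ∈ Ioo #A #C | chainSet τ k ∈ F} = #{X ∈ strictlyBetween F A C | chainSet τ #X = X} := by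
  have hCn : #C ≤ n := by simpa using card_le_univ C
  refine card_nbij' (chainSet τ) card (fun k hk => ?_) (fun X hX => ?_) (fun k hk => ?_)
    (fun X hX => ?_)
  · simp only [coe_filter, mem_Ioo, Set.mem_ofPred_eq] at hk
    have hkn : k ≤ n := by omega
    simp only [coe_filter, strictlyBetween, mem_filter, Set.mem_ofPred_eq, card_chainSet τ hkn]
    refine ⟨⟨hk.2, ?_, ?_⟩, trivial⟩
    · rw [← hA]; exact chainSet_ssubset_chainSet τ hk.1.1 hkn
    · conv_rhs => rw [← hC]
      exact chainSet_ssubset_chainSet τ hk.1.2 hCn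
  · simp only [coe_filter, strictlyBetween, mem_filter, Set.mem_ofPred_eq, mem_Ioo] at hX ⊢
    exact ⟨⟨card_lt_card hX.1.2.1, card_lt_card hX.1.2.2⟩, by simpa only [hX.2] using hX.1.1⟩
  · simp only [coe_filter, mem_Ioo, Set.mem_ofPred_eq] at hk
    exact card_chainSet τ (by omega)
  · simp only [coe_filter, Set.mem_ofPred_eq] at hX
    exact hX.2

theorem sum_perm_window_card_filter_Ioo_le {A C : Finset (Fin n)} {σ : Perm (Fin n)}
    (hA : chainSet σ #A = A) (hC : chainSet σ #C = C) :
    ∑ f : Perm (Window n #A #C), #{k ∈ Ioo #A #C | chainSet (Perm.ofSubtype f * σ) k ∈ F}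
      ≤ ∑ X ∈ strictlyBetween F A C, (#X - #A)! * (#C - #X)! := by
  have hCn : #C ≤ n := by simpa using card_le_univ C
  calc ∑ f : Perm (Window n #A #C), #{k ∈ Ioo #A #C | chainSet (Perm.ofSubtype f * σ) k ∈ F}
      = ∑ f : Perm (Window n #A #C),
          #{X ∈ strictlyBetween F A C | chainSet (Perm.ofSubtype f * σ) #X = X} :=
        sum_congr rfl fun f _ => card_filter_Ioo_chainSet_mem
          (by rw [chainSet_ofSubtype_mul f σ (Or.inl le_rfl), hA])
          (by rw [chainSet_ofSubtype_mul f σ (Or.inr le_rfl), hC])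
    _ = ∑ X ∈ strictlyBetween F A C,
          #{f : Perm (Window n #A #C) | chainSet (Perm.ofSubtype f * σ) #X = X} :=
        sum_card_bipartiteAbove_eq_sum_card_bipartiteBelow _
    _ ≤ ∑ X ∈ strictlyBetween F A C, (#X - #A)! * (#C - #X)! := sum_le_sum fun X hX => by
        have hX := (mem_filter.1 hX).2
        exact card_filter_chainSet_ofSubtype_mul_eq_le σ X (card_le_card hX.1.subset)
          (card_le_card hX.2.subset) hCn

theorem sum_card_filter_Ioo_chainSet_mem_le {r m : ℕ} (hm : 2 ≤ m)
    (hrm : r + m.choose (m / 2) + 1 ≤ 2 ^ m) (hF : DiamondFree r F) {A C : Finset (Fin n)}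
    (hA : A ∈ F) (hC : C ∈ F) {T : Finset (Perm (Fin n))}
    (hT : ∀ σ ∈ T, chainSet σ #A = A ∧ chainSet σ #C = C)
    (hT_mul : ∀ f : Perm (Window n #A #C), ∀ σ ∈ T, Perm.ofSubtype f * σ ∈ T) :
    ∑ σ ∈ T, #{k ∈ Ioo #A #C | chainSet σ k ∈ F} ≤ (m - 2) * #T := by
  rcases T.eq_empty_or_nonempty with rfl | ⟨σ₀, hσ₀⟩
  · simp
  rcases lt_or_ge #A #C with hAC | hCA
  swap
  · simp [Ioo_eq_empty_of_le hCA]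
  have hCn : #C ≤ n := by simpa using card_le_univ C
  have hssub : A ⊂ C := by
    rw [← (hT σ₀ hσ₀).1, ← (hT σ₀ hσ₀).2]; exact chainSet_ssubset_chainSet σ₀ hAC hCn
  set I : Perm (Fin n) → ℕ := fun σ => #{k ∈ Ioo #A #C | chainSet σ k ∈ F}
  have hG : ∑ X ∈ strictlyBetween F A C, (#X - #A)! * (#C - #X)! ≤ (m - 2) * (#C - #A)! := by
    have := hF A hA C hC hssub
    exact sum_factorial_mul_factorial_le hm (fun X hX => (mem_filter.1 hX).2) (by omega)
  have hinv (f : Perm (Window n #A #C)) : ∑ σ ∈ T, I (Perm.ofSubtype f * σ) = ∑ σ ∈ T, I σ :=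
    sum_equiv (Equiv.mulLeft (Perm.ofSubtype f))
      (fun σ => ⟨hT_mul f σ, fun h => by simpa [map_inv] using hT_mul f⁻¹ _ h⟩) fun _ _ => rfl
  have hdouble : (#C - #A)! * ∑ σ ∈ T, I σ ≤ (#C - #A)! * ((m - 2) * #T) :=
    calc (#C - #A)! * ∑ σ ∈ T, I σ
        = ∑ f : Perm (Window n #A #C), ∑ σ ∈ T, I (Perm.ofSubtype f * σ) := by
          rw [sum_congr rfl fun f _ => hinv f, sum_const, Finset.card_univ,
            card_perm_window hAC.le hCn, smul_eq_mul]
      _ = ∑ σ ∈ T, ∑ f : Perm (Window n #A #C), I (Perm.ofSubtype f * σ) := sum_comm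
      _ ≤ ∑ σ ∈ T, ∑ X ∈ strictlyBetween F A C, (#X - #A)! * (#C - #X)! :=
          sum_le_sum fun σ hσ => sum_perm_window_card_filter_Ioo_le (hT σ hσ).1 (hT σ hσ).2
      _ ≤ (#C - #A)! * ((m - 2) * #T) := by
          rw [sum_const, smul_eq_mul]
          nlinarith
  exact Nat.le_of_mul_le_mul_left hdouble (factorial_pos _)

def hitLevels (F : Finset (Finset (Fin n))) (σ : Perm (Fin n)) : Finset ℕ :=
  {k ∈ range (n + 1) | chainSet σ k ∈ F}

@[simp]
theorem mem_hitLevels {σ : Perm (Fin n)} {k : ℕ} :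
    k ∈ hitLevels F σ ↔ k ≤ n ∧ chainSet σ k ∈ F := by
  simp [hitLevels]

/-- For `A, C ∈ F`, the chains whose lowest and highest members of `F` are `A` and `C`; these
classes partition the chains meeting `F`. -/
def chainClass (F : Finset (Finset (Fin n))) (A C : Finset (Fin n)) : Finset (Perm (Fin n)) :=
  {σ | chainSet σ #A = A ∧ chainSet σ #C = C ∧ ∀ k ∈ hitLevels F σ, #A ≤ k ∧ k ≤ #C}

theorem exists_mem_chainClass {σ : Perm (Fin n)} (hσ : (hitLevels F σ).Nonempty) :
    ∃ p ∈ F ×ˢ F, σ ∈ chainClass F p.1 p.2 := by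
  have hmin := mem_hitLevels.1 ((hitLevels F σ).min'_mem hσ)
  have hmax := mem_hitLevels.1 ((hitLevels F σ).max'_mem hσ)
  refine ⟨(chainSet σ _, chainSet σ _), mem_product.2 ⟨hmin.2, hmax.2⟩, ?_⟩
  simp only [chainClass, mem_filter, mem_univ, true_and, card_chainSet σ hmin.1,
    card_chainSet σ hmax.1]
  exact fun k hk => ⟨min'_le _ k hk, le_max' _ k hk⟩

theorem pairwiseDisjoint_chainClass :
    ((F ×ˢ F : Finset _) : Set (Finset (Fin n) × Finset (Fin n))).PairwiseDisjoint
      fun p => chainClass F p.1 p.2 := by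
  rintro ⟨A, C⟩ hp ⟨A', C'⟩ hq hpq
  refine disjoint_left.2 fun σ h h' => hpq ?_
  rw [coe_product, Set.mem_prod] at hp hq
  simp only [chainClass, mem_filter, mem_univ, true_and] at h h'
  have hit : ∀ X ∈ F, chainSet σ #X = X → #X ∈ hitLevels F σ := fun X hX hσX =>
    mem_hitLevels.2 ⟨by simpa using card_le_univ X, by rw [hσX]; exact hX⟩
  have hAA' : #A = #A' :=
    le_antisymm (h.2.2 _ (hit A' hq.1 h'.1)).1 (h'.2.2 _ (hit A hp.1 h.1)).1
  have hCC' : #C = #C' :=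
    le_antisymm (h'.2.2 _ (hit C hp.2 h.2.1)).2 (h.2.2 _ (hit C' hq.2 h'.2.1)).2
  rw [← h.1, ← h'.1, hAA', ← h.2.1, ← h'.2.1, hCC']

theorem ofSubtype_mul_mem_chainClass {σ : Perm (Fin n)} {A C : Finset (Fin n)}
    (hσ : σ ∈ chainClass F A C) (f : Perm (Window n #A #C)) :
    Perm.ofSubtype f * σ ∈ chainClass F A C := by
  simp only [chainClass, mem_filter, mem_univ, true_and, mem_hitLevels] at hσ ⊢
  refine ⟨by rw [chainSet_ofSubtype_mul f σ (Or.inl le_rfl), hσ.1],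
    by rw [chainSet_ofSubtype_mul f σ (Or.inr le_rfl), hσ.2.1], fun k hk => ⟨?_, ?_⟩⟩
  · by_contra! hkA
    rw [chainSet_ofSubtype_mul f σ (Or.inl hkA.le)] at hk
    exact absurd (hσ.2.2 k hk).1 (by omega)
  · by_contra! hkC
    rw [chainSet_ofSubtype_mul f σ (Or.inr hkC.le)] at hk
    exact absurd (hσ.2.2 k hk).2 (by omega)

theorem card_hitLevels_le {σ : Perm (Fin n)} {A C : Finset (Fin n)}
    (hσ : σ ∈ chainClass F A C) :
    #(hitLevels F σ) ≤ #{k ∈ Ioo #A #C | chainSet σ k ∈ F} + 2 := by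
  simp only [chainClass, mem_filter, mem_univ, true_and] at hσ
  calc #(hitLevels F σ) ≤ #(insert #A (insert #C {k ∈ Ioo #A #C | chainSet σ k ∈ F})) := by
        refine card_le_card fun k hk => ?_
        have hk' := hσ.2.2 k hk
        rw [mem_hitLevels] at hk
        rcases eq_or_ne k #A with rfl | hkA
        · exact mem_insert_self _ _
        rcases eq_or_ne k #C with rfl | hkC
        · exact mem_insert_of_mem (mem_insert_self _ _)
        refine mem_insert_of_mem (mem_insert_of_mem (mem_filter.2 ⟨mem_Ioo.2 ⟨?_, ?_⟩, hk.2⟩))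
          <;> omega
    _ ≤ #{k ∈ Ioo #A #C | chainSet σ k ∈ F} + 2 := by
        have := card_insert_le #A (insert #C {k ∈ Ioo #A #C | chainSet σ k ∈ F})
        have := card_insert_le #C {k ∈ Ioo #A #C | chainSet σ k ∈ F}
        omega

theorem sum_card_hitLevels_chainClass_le {r m : ℕ} (hm : 2 ≤ m)
    (hrm : r + m.choose (m / 2) + 1 ≤ 2 ^ m) (hF : DiamondFree r F) {A C : Finset (Fin n)}
    (hA : A ∈ F) (hC : C ∈ F) :
    ∑ σ ∈ chainClass F A C, #(hitLevels F σ) ≤ m * #(chainClass F A C) := by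
  have := sum_card_filter_Ioo_chainSet_mem_le hm hrm hF hA hC (T := chainClass F A C)
    (fun σ hσ => by simp only [chainClass, mem_filter] at hσ; exact ⟨hσ.2.1, hσ.2.2.1⟩)
    fun f σ hσ => ofSubtype_mul_mem_chainClass hσ f
  calc ∑ σ ∈ chainClass F A C, #(hitLevels F σ)
      ≤ ∑ σ ∈ chainClass F A C, (#{k ∈ Ioo #A #C | chainSet σ k ∈ F} + 2) :=
        sum_le_sum fun σ hσ => card_hitLevels_le hσ
    _ ≤ m * #(chainClass F A C) := by
        rw [sum_add_distrib, sum_const, smul_eq_mul]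
        have : m = m - 2 + 2 := by omega
        nlinarith

/-- `∑ σ, #(hitLevels F σ) / n!` is the Lubell function of `F`. -/
theorem sum_card_hitLevels_le {r m : ℕ} (hm : 2 ≤ m) (hrm : r + m.choose (m / 2) + 1 ≤ 2 ^ m)
    (hF : DiamondFree r F) : ∑ σ, #(hitLevels F σ) ≤ m * n ! := by
  set cls : Finset (Fin n) × Finset (Fin n) → Finset (Perm (Fin n)) :=
    fun p => chainClass F p.1 p.2
  calc ∑ σ, #(hitLevels F σ) = ∑ σ ∈ (F ×ˢ F).biUnion cls, #(hitLevels F σ) := by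
        refine (sum_subset (subset_univ _) fun σ _ hσ => ?_).symm
        by_contra hne
        obtain ⟨p, hp, hσp⟩ := exists_mem_chainClass (card_pos.1 (Nat.pos_of_ne_zero hne))
        exact hσ (mem_biUnion.2 ⟨p, hp, hσp⟩)
    _ = ∑ p ∈ F ×ˢ F, ∑ σ ∈ cls p, #(hitLevels F σ) := sum_biUnion pairwiseDisjoint_chainClass
    _ ≤ ∑ p ∈ F ×ˢ F, m * #(cls p) := sum_le_sum fun p hp =>
        sum_card_hitLevels_chainClass_le hm hrm hF (mem_product.1 hp).1 (mem_product.1 hp).2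
    _ = m * #((F ×ˢ F).biUnion cls) := by rw [← mul_sum, card_biUnion pairwiseDisjoint_chainClass]
    _ ≤ m * n ! := by
        gcongr
        simpa [Fintype.card_perm] using card_le_univ ((F ×ˢ F).biUnion cls)

end Lubell

theorem sum_card_hitLevels_fiber {n t : ℕ} (c : Finset (Fin n) → Fin t) (σ : Perm (Fin n)) :
    ∑ i, #(hitLevels {X | c X = i} σ) = n + 1 := by
  rw [← card_range (n + 1), card_eq_sum_card_fiberwise (f := fun k => c (chainSet σ k))
    (t := univ) fun _ _ => mem_coe.2 (mem_univ _)]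
  simp [hitLevels]

theorem exists_monochromatic_diamond {r m t : ℕ} (hm : 2 ≤ m)
    (hrm : r + m.choose (m / 2) + 1 ≤ 2 ^ m) (c : Finset (Fin (t * m)) → Fin t) :
    ∃ (i : Fin t) (A C : Finset (Fin (t * m))) (B : Fin r → Finset (Fin (t * m))),
      Function.Injective B ∧ (∀ k, A ⊂ B k ∧ B k ⊂ C) ∧
      c A = i ∧ c C = i ∧ ∀ k, c (B k) = i := by
  by_contra hno
  have hfree (i : Fin t) : DiamondFree r ({X | c X = i} : Finset _) := by
    by_contra hi
    obtain ⟨A, C, B, hB, hABC, hA, hC, hBi⟩ := exists_diamond_of_not_diamondFree hi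
    simp only [mem_filter, mem_univ, true_and] at hA hC hBi
    exact hno ⟨i, A, C, B, hB, hABC, hA, hC, hBi⟩
  have hcount : (t * m + 1) * (t * m)! ≤ t * (m * (t * m)!) :=
    calc (t * m + 1) * (t * m)!
        = ∑ σ : Perm (Fin (t * m)), ∑ i, #(hitLevels {X | c X = i} σ) := by
          simp [sum_card_hitLevels_fiber, Fintype.card_perm, mul_comm]
      _ = ∑ i, ∑ σ : Perm (Fin (t * m)), #(hitLevels {X | c X = i} σ) := sum_comm
      _ ≤ ∑ _i : Fin t, m * (t * m)! :=
          sum_le_sum fun i _ => sum_card_hitLevels_le hm hrm (hfree i)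
      _ = t * (m * (t * m)!) := by simp
  nlinarith [factorial_pos (t * m)]

theorem add_two_le_two_pow_of_injective {α : Type*} [DecidableEq α] {r : ℕ} {A C : Finset α}
    {B : Fin r → Finset α} (hB : Function.Injective B) (hABC : ∀ k, A ⊂ B k ∧ B k ⊂ C)
    (hAC : A ⊂ C) : r + 2 ≤ 2 ^ (#C - #A) := by
  have hr : r ≤ #(Ioo A C) := by
    simpa using card_le_card_of_injOn B (s := univ) (fun k _ => mem_Ioo.2 (hABC k)) hB.injOn
  have : 2 ^ 1 ≤ 2 ^ (#C - #A) :=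
    Nat.pow_le_pow_right two_pos (by have := card_lt_card hAC; omega)
  rw [card_Ioo_finset hAC.subset] at hr
  omega

theorem boolean_ramsey_diamond_uniformly_L_bounded_general
    (r : ℕ) (hr : 1 ≤ r) (m : ℕ)
    (h1 : 2 ^ (m - 1) ≤ r + 1)
    (h2 : r + m.choose (m / 2) + 1 ≤ 2 ^ m)
    (t : ℕ) :
    IsLeast
      {N : ℕ | ∀ c : Finset (Fin N) → Fin t,
        ∃ (i : Fin t) (A C : Finset (Fin N)) (B : Fin r → Finset (Fin N)),
          Function.Injective B ∧
          (∀ k, A ⊂ B k ∧ B k ⊂ C) ∧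
          c A = i ∧ c C = i ∧ (∀ k, c (B k) = i)}
      (t * m) := by
  have hm : 2 ≤ m := by
    by_contra! hm
    have : 2 ^ m ≤ 2 ^ 1 := Nat.pow_le_pow_right two_pos (by omega)
    have := choose_pos (Nat.div_le_self m 2)
    omega
  refine ⟨fun c => exists_monochromatic_diamond hm h2 c, fun N hN => ?_⟩
  by_contra! hNtm
  have hcolor (S : Finset (Fin N)) : #S / m < t :=
    Nat.div_lt_of_lt_mul (by have := card_le_univ S; simp at this; rw [mul_comm]; omega)
  obtain ⟨i, A, C, B, hB, hABC, hA, hC, -⟩ := hN fun S => ⟨#S / m, hcolor S⟩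
  have hAC : A ⊂ C := (hABC ⟨0, hr⟩).1.trans (hABC ⟨0, hr⟩).2
  have hdiff : #C - #A < m := by
    have hdiv : #C / m = #A / m := by simpa [Fin.ext_iff] using hC.trans hA.symm
    have h₁ := Nat.lt_mul_div_succ #C (by omega : 0 < m)
    have h₂ := Nat.mul_div_le #A m
    rw [hdiv, mul_add, mul_one] at h₁
    omega
  have := add_two_le_two_pow_of_injective hB hABC hAC
  have := Nat.pow_le_pow_right two_pos (by omega : #C - #A ≤ m - 1)
  omega

/-- for `r ≥ 1`, `m = ⌈log₂(r+2)⌉` (i.e. `Nat.clog 2 (r+2)`), if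
`2^{m−1} − 1 ≤ r ≤ 2^m − (m choose ⌊m/2⌋) − 1` (stated in subtraction-free form),
then for every `t ≥ 1`, `BR^1_t(⋄_r) = t·m`: `t·m` is the least `N` such that every
`t`-coloring of the elements of `B_N` contains a monochromatic copy of the
`r`-diamond, i.e. distinct subsets `A, B 1, …, B r, C` of the same color with
`A ⊂ B k ⊂ C` for all `k`. -/
theorem boolean_ramsey_diamond_uniformly_L_bounded
    (r : ℕ) (hr : 1 ≤ r) (m : ℕ) (hm : m = Nat.clog 2 (r + 2))
    (h1 : 2 ^ (m - 1) ≤ r + 1)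
    (h2 : r + m.choose (m / 2) + 1 ≤ 2 ^ m)
    (t : ℕ) (ht : 1 ≤ t) :
    IsLeast
      {N : ℕ | ∀ c : Finset (Fin N) → Fin t,
        ∃ (i : Fin t) (A C : Finset (Fin N)) (B : Fin r → Finset (Fin N)),
          Function.Injective B ∧
          (∀ k, A ⊂ B k ∧ B k ⊂ C) ∧
          c A = i ∧ c C = i ∧ (∀ k, c (B k) = i)}
      (t * m) :=
  boolean_ramsey_diamond_uniformly_L_bounded_general r hr m h1 h2 t
end

section
/- For every integer t ≥ 1, the least integer N such that every t-coloring of the elements of the Boolean lattice B_N contains a monochromatic copy of the butterfly poset is 2t + 1. (That is, BR^1_t(⋈) = 2t + 1.) -/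
/-!
Lower bound: for `N ≤ 2t` colour `A` by `⌊(|A| mod 2t) / 2⌋`. A butterfly `X₁, X₂ ⊂ Y₁, Y₂` has
`min |Xᵢ| < |X₁ ∪ X₂| ≤ |Y₁ ∩ Y₂| < max |Yⱼ|`, so it cannot lie in two consecutive levels. When
`N = 2t` colour `0` also gets the top level `{[N]}`; this is harmless, since each `Yⱼ` has two
distinct proper subsets, hence at least two elements, and so would have to be `[N]`.

Upper bound, a Lubell-type count: let `n = 2t + 1` and suppose no butterfly is monochromatic. A
monochromatic 4-chain is a butterfly, so no colour occurs four times on a maximal chain, and as a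
maximal chain has `2t + 2` sets, at least two colours occur three times on it. Fix a colour `k`. The
middles `Y` of the `k`-coloured 3-chains `X ⊂ Y ⊂ Z` form an antichain, and each determines its `X`
and `Z`. The maximal chains through `X ⊂ Y ⊂ Z` are a `1 / (C(|Y|, |X|) C(n - |Y|, |Z| - |Y|))`
fraction of those through `Y`, and by LYM at most `n!` maximal chains pass through the middles.
The binomial product is at least `2t` when `X ≠ ∅` and `Z ≠ [n]`, and at least `2` when only one of
these fails, so at most `(1 + t eₖ) n! / 2t` maximal chains carry `k` three times, where `eₖ` is the
number of sets among `∅`, `[n]` of colour `k`. As `∑ₖ eₖ = 2` the total is at most `3n!/2 < 2n!`.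
-/

open Finset Equiv Nat

section Butterfly

variable {P κ : Type*} [PartialOrder P]

def HasMonoButterfly (c : P → κ) : Prop :=
  ∃ x₁ x₂ y₁ y₂ : P, x₁ ≠ x₂ ∧ x₁ ≠ y₁ ∧ x₁ ≠ y₂ ∧ x₂ ≠ y₁ ∧ x₂ ≠ y₂ ∧ y₁ ≠ y₂ ∧
    x₁ ≤ y₁ ∧ x₁ ≤ y₂ ∧ x₂ ≤ y₁ ∧ x₂ ≤ y₂ ∧ c x₂ = c x₁ ∧ c y₁ = c x₁ ∧ c y₂ = c x₁

def IsMonoChain3 (c : P → κ) (k : κ) (x y z : P) : Prop :=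
  x < y ∧ y < z ∧ c x = k ∧ c y = k ∧ c z = k

variable {c : P → κ} {k : κ} {x y z x' y' z' : P}

theorem hasMonoButterfly_of_lt_of_lt_of_lt {a b d e : P} (hab : a < b) (hbd : b < d)
    (hde : d < e) (hb : c b = c a) (hd : c d = c a) (he : c e = c a) : HasMonoButterfly c :=
  ⟨a, b, d, e, hab.ne, (hab.trans hbd).ne, (hab.trans (hbd.trans hde)).ne, hbd.ne,
    (hbd.trans hde).ne, hde.ne, (hab.trans hbd).le, (hab.trans (hbd.trans hde)).le, hbd.le,
    (hbd.trans hde).le, hb, hd, he⟩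

theorem IsMonoChain3.ends_eq (hB : ¬HasMonoButterfly c) (h : IsMonoChain3 c k x y z)
    (h' : IsMonoChain3 c k x' y z') : x = x' ∧ z = z' := by
  obtain ⟨hxy, hyz, hx, hy, hz⟩ := h
  obtain ⟨hxy', hyz', hx', -, hz'⟩ := h'
  constructor
  · by_contra hne
    exact hB ⟨x, x', y, z, hne, hxy.ne, (hxy.trans hyz).ne, hxy'.ne, (hxy'.trans hyz).ne, hyz.ne,
      hxy.le, (hxy.trans hyz).le, hxy'.le, (hxy'.trans hyz).le, hx'.trans hx.symm,
      hy.trans hx.symm, hz.trans hx.symm⟩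
  · by_contra hne
    exact hB ⟨x, y, z, z', hxy.ne, (hxy.trans hyz).ne, (hxy.trans hyz').ne, hyz.ne, hyz'.ne, hne,
      (hxy.trans hyz).le, (hxy.trans hyz').le, hyz.le, hyz'.le, hy.trans hx.symm,
      hz.trans hx.symm, hz'.trans hx.symm⟩

theorem IsMonoChain3.mid_eq_of_le (hB : ¬HasMonoButterfly c) (h : IsMonoChain3 c k x y z)
    (h' : IsMonoChain3 c k x' y' z') (hy : y ≤ y') : y = y' := by
  by_contra hne
  exact hB <| hasMonoButterfly_of_lt_of_lt_of_lt h.1 (hy.lt_of_ne hne) h'.2.1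
    (h.2.2.2.1.trans h.2.2.1.symm) (h'.2.2.2.1.trans h.2.2.1.symm)
    (h'.2.2.2.2.trans h.2.2.1.symm)

end Butterfly

section Finset

variable {α : Type*} {s t : Finset α}

theorem Finset.two_le_card_of_ssubset_of_ssubset {s₁ s₂ : Finset α} (h : s₁ ≠ s₂) (h₁ : s₁ ⊂ t)
    (h₂ : s₂ ⊂ t) : 2 ≤ #t := by
  by_contra! ht
  have e₁ : s₁ = ∅ := card_eq_zero.mp (by have := card_lt_card h₁; omega)
  have e₂ : s₂ = ∅ := card_eq_zero.mp (by have := card_lt_card h₂; omega)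
  exact h (e₁.trans e₂.symm)

variable [DecidableEq α]

theorem Finset.min_card_lt_card_union (h : s ≠ t) : min #s #t < #(s ∪ t) := by
  by_contra! hle
  have hs := eq_of_subset_of_card_le subset_union_left (hle.trans (min_le_left _ _))
  have ht := eq_of_subset_of_card_le subset_union_right (hle.trans (min_le_right _ _))
  exact h (hs.trans ht.symm)

theorem Finset.card_inter_lt_max_card (h : s ≠ t) : #(s ∩ t) < max #s #t := by
  by_contra! hle
  have hs := eq_of_subset_of_card_le inter_subset_left ((le_max_left _ _).trans hle)
  have ht := eq_of_subset_of_card_le inter_subset_right ((le_max_right _ _).trans hle)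
  exact h (hs.symm.trans ht)

end Finset

theorem Nat.le_choose_of_pos_of_lt {n r : ℕ} (h₀ : 0 < r) (h : r < n) : n ≤ n.choose r := by
  induction n generalizing r with
  | zero => omega
  | succ m ih =>
    obtain ⟨r, rfl⟩ := Nat.exists_eq_add_one_of_ne_zero h₀.ne'
    rw [choose_succ_succ']
    rcases Nat.eq_zero_or_pos r with rfl | hr
    · simp
    · have := ih hr (by omega)
      have := choose_pos (show r + 1 ≤ m by omega)
      omega

theorem Finset.exists_strictMono_of_le_card {α : Type*} [LinearOrder α] {s : Finset α} {m : ℕ}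
    (h : m ≤ #s) : ∃ f : Fin m → α, StrictMono f ∧ ∀ i, f i ∈ s :=
  ⟨(Fin.castLEOrderEmb h).trans (s.orderEmbOfFin (rfl : #s = #s)), OrderEmbedding.strictMono _,
    fun _ => orderEmbOfFin_mem s rfl _⟩

theorem two_le_card_filter_three_le {ι : Type*} [Fintype ι] (m : ι → ℕ) (hm : ∀ i, m i ≤ 3)
    (hsum : 2 * Fintype.card ι + 2 ≤ ∑ i, m i) : 2 ≤ #{i | 3 ≤ m i} := by
  have : ∑ i, m i ≤ ∑ i, (2 + if 3 ≤ m i then 1 else 0) :=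
    sum_le_sum fun i _ => by have := hm i; split_ifs <;> omega
  rw [sum_add_distrib, sum_const, sum_boole, Finset.card_univ, smul_eq_mul, Nat.cast_id] at this
  omega

theorem Equiv.Perm.card_comp_eq_le {α ι : Type*} [Fintype α] [DecidableEq α] [Fintype ι]
    [DecidableEq ι] (f g : α → ι) :
    Fintype.card {τ : Perm α // g ∘ τ = f} ≤ ∏ i, (Fintype.card {a // f a = i})! := by
  rcases isEmpty_or_nonempty {τ : Perm α // g ∘ τ = f} with h | ⟨τ₀, h₀⟩
  · simp
  rw [← DomMulAct.stabilizer_card f]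
  refine Fintype.card_le_of_injective (fun τ => ⟨τ.1⁻¹ * τ₀, ?_⟩) fun τ τ' h => ?_
  · ext a
    rw [Function.comp_apply, ← congrFun τ.2, ← congrFun h₀ a]
    simp
  · exact Subtype.ext (by simpa using congrArg Subtype.val h)

section ChainLevel

variable {α : Type*} [DecidableEq α]

def chainLevel (X Y Z : Finset α) (a : α) : Fin 4 :=
  if a ∈ X then 0 else if a ∈ Y then 1 else if a ∈ Z then 2 else 3

theorem prod_factorial_card_chainLevel [Fintype α] {X Y Z : Finset α} (hXY : X ⊆ Y)
    (hYZ : Y ⊆ Z) :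
    ∏ i, (Fintype.card {a // chainLevel X Y Z a = i})! =
      (#X)! * (#Y - #X)! * (#Z - #Y)! * (Fintype.card α - #Z)! := by
  have hlevel : ∀ a, (chainLevel X Y Z a = 0 ↔ a ∈ X) ∧ (chainLevel X Y Z a = 1 ↔ a ∈ Y \ X) ∧
      (chainLevel X Y Z a = 2 ↔ a ∈ Z \ Y) ∧ (chainLevel X Y Z a = 3 ↔ a ∈ Zᶜ) := by
    intro a
    have := @hXY a
    have := @hYZ a
    unfold chainLevel
    split_ifs <;> simp_all
  simp only [Fintype.card_subtype, Fin.prod_univ_four, hlevel, filter_mem_eq_inter, univ_inter,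
    card_sdiff_of_subset hXY, card_sdiff_of_subset hYZ, card_compl]

end ChainLevel

theorem sum_factorial_mul_factorial_le_of_isAntichain {α : Type*} [Fintype α]
    {𝒜 : Finset (Finset α)} (h𝒜 : IsAntichain (· ⊆ ·) (𝒜 : Set (Finset α))) :
    ∑ s ∈ 𝒜, (#s)! * (Fintype.card α - #s)! ≤ (Fintype.card α)! := by
  have hLYM := lubell_yamamoto_meshalkin_inequality_sum_inv_choose (𝕜 := ℚ) h𝒜
  have hterm : ∀ s ∈ 𝒜, ((#s)! * (Fintype.card α - #s)! : ℚ) =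
      (Fintype.card α)! * ((Fintype.card α).choose #s : ℚ)⁻¹ := by
    intro s _
    rw [eq_mul_inv_iff_mul_eq₀ (by exact_mod_cast (choose_pos (card_le_univ s)).ne'), mul_comm,
      ← mul_assoc]
    exact_mod_cast choose_mul_factorial_mul_factorial (card_le_univ s)
  have : (∑ s ∈ 𝒜, ((#s)! * (Fintype.card α - #s)! : ℚ)) ≤ (Fintype.card α)! := by
    rw [sum_congr rfl hterm, ← mul_sum]
    exact mul_le_of_le_one_right (by positivity) hLYM
  exact_mod_cast this

section LowerBound

variable {α : Type*} {n : ℕ}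

/-- Colour `i` is given to the levels `2i` and `2i + 1`, and colour `0` also to level `2n`. -/
def pairedLevelColoring (hn : 0 < n) (A : Finset α) : Fin n :=
  ⟨#A % (2 * n) / 2, Nat.div_lt_of_lt_mul (Nat.mod_lt _ (by omega))⟩

theorem not_hasMonoButterfly_pairedLevelColoring [Fintype α] [DecidableEq α] (hn : 0 < n)
    (hα : Fintype.card α ≤ 2 * n) : ¬HasMonoButterfly (pairedLevelColoring (α := α) hn) := by
  rintro ⟨X₁, X₂, Y₁, Y₂, hX, hX₁₁, hX₁₂, hX₂₁, hX₂₂, hY, h₁₁, h₁₂, h₂₁, h₂₂, e₂, e₃, e₄⟩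
  set c := pairedLevelColoring (α := α) hn
  set v := #X₁ % (2 * n) / 2
  have hcol : ∀ A, c A = c X₁ → #A % (2 * n) / 2 = v := fun A hA => congrArg Fin.val hA
  have hle : ∀ A : Finset α, #A ≤ 2 * n := fun A => (card_le_univ A).trans hα
  rcases Nat.eq_zero_or_pos v with hv | hv
  · have huniv : ∀ Y, c Y = c X₁ → 2 ≤ #Y → Y = univ := by
      intro Y hYc h2
      have h := hcol Y hYc
      have hY2n : #Y = 2 * n := by
        by_contra hne
        rw [Nat.mod_eq_of_lt (lt_of_le_of_ne (hle Y) hne)] at h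
        omega
      exact (card_eq_iff_eq_univ Y).mp (le_antisymm (card_le_univ Y) (hY2n ▸ hα))
    have hY₁ := two_le_card_of_ssubset_of_ssubset hX (h₁₁.ssubset_of_ne hX₁₁)
      (h₂₁.ssubset_of_ne hX₂₁)
    have hY₂ := two_le_card_of_ssubset_of_ssubset hX (h₁₂.ssubset_of_ne hX₁₂)
      (h₂₂.ssubset_of_ne hX₂₂)
    exact hY ((huniv Y₁ e₃ hY₁).trans (huniv Y₂ e₄ hY₂).symm)
  · have hlev : ∀ A, c A = c X₁ → #A / 2 = v := by
      intro A hA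
      have h := hcol A hA
      have hlt : #A < 2 * n := lt_of_le_of_ne (hle A) fun he => by simp [he] at h; omega
      rwa [Nat.mod_eq_of_lt hlt] at h
    have hunion := min_card_lt_card_union hX
    have hinter := card_inter_lt_max_card hY
    have hsub := card_le_card <| union_subset (subset_inter h₁₁ h₁₂) (subset_inter h₂₁ h₂₂)
    have := hlev X₁ rfl; have := hlev X₂ e₂; have := hlev Y₁ e₃; have := hlev Y₂ e₄
    omega

end LowerBound

section PermChain

variable {n : ℕ}

/-- The `j`-th set `τ⁻¹ {0, …, j - 1}` of the maximal chain of `B_n` encoded by `τ`. -/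
def permChain (τ : Perm (Fin n)) (j : ℕ) : Finset (Fin n) := {i | (τ i : ℕ) < j}

theorem mem_permChain {τ : Perm (Fin n)} {j : ℕ} {i : Fin n} :
    i ∈ permChain τ j ↔ (τ i : ℕ) < j := by
  simp [permChain]

theorem card_permChain (τ : Perm (Fin n)) {j : ℕ} (hj : j ≤ n) : #(permChain τ j) = j := by
  have : permChain τ j = ({v : Fin n | (v : ℕ) < j} : Finset (Fin n)).map τ.symm.toEmbedding := by
    ext i
    simp [mem_permChain]
  rw [this, card_map, Fin.card_filter_val_lt, min_eq_right hj]

theorem permChain_ssubset (τ : Perm (Fin n)) {j j' : ℕ} (h : j < j') (h' : j' ≤ n) :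
    permChain τ j ⊂ permChain τ j' := by
  refine ssubset_of_subset_of_ne (fun i hi => ?_) fun he => ?_
  · rw [mem_permChain] at hi ⊢
    omega
  · have := card_permChain τ h'
    rw [← he, card_permChain τ (h.le.trans h')] at this
    omega

theorem card_permChain_through_le {X Y Z : Finset (Fin n)} (hXY : X ⊆ Y) (hYZ : Y ⊆ Z) :
    #{τ : Perm (Fin n) | permChain τ #X = X ∧ permChain τ #Y = Y ∧ permChain τ #Z = Z} ≤
      (#X)! * (#Y - #X)! * (#Z - #Y)! * (n - #Z)! := by
  set I : ℕ → Finset (Fin n) := fun m => {v | (v : ℕ) < m}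
  have hsub : ∀ τ : Perm (Fin n), permChain τ #X = X ∧ permChain τ #Y = Y ∧ permChain τ #Z = Z →
      chainLevel (I #X) (I #Y) (I #Z) ∘ τ = chainLevel X Y Z := by
    intro τ hτ
    have hmem : ∀ {S : Finset (Fin n)}, permChain τ #S = S → ∀ a, (τ a : ℕ) < #S ↔ a ∈ S :=
      fun hS a => by rw [← mem_permChain, hS]
    ext a
    simp [chainLevel, I, hmem hτ.1, hmem hτ.2.1, hmem hτ.2.2]
  calc _ ≤ Fintype.card
        {τ : Perm (Fin n) // chainLevel (I #X) (I #Y) (I #Z) ∘ τ = chainLevel X Y Z} := by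
        rw [Fintype.card_subtype]
        exact card_le_card fun τ hτ => mem_filter.mpr ⟨mem_univ _, hsub τ (mem_filter.mp hτ).2⟩
    _ ≤ _ := Perm.card_comp_eq_le _ _
    _ = _ := by rw [prod_factorial_card_chainLevel hXY hYZ, Fintype.card_fin]

theorem card_permChain_through_mul_choose_le {X Y Z : Finset (Fin n)} (hXY : X ⊆ Y)
    (hYZ : Y ⊆ Z) :
    #{τ : Perm (Fin n) | permChain τ #X = X ∧ permChain τ #Y = Y ∧ permChain τ #Z = Z} *
      ((#Y).choose #X * (n - #Y).choose (#Z - #Y)) ≤ (#Y)! * (n - #Y)! := by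
  have hX := card_le_card hXY
  have hY := card_le_card hYZ
  have hZ : #Z ≤ n := by simpa using card_le_univ Z
  have e₁ := choose_mul_factorial_mul_factorial hX
  have e₂ := choose_mul_factorial_mul_factorial (show #Z - #Y ≤ n - #Y by omega)
  rw [show n - #Y - (#Z - #Y) = n - #Z by omega] at e₂
  calc _ ≤ (#X)! * (#Y - #X)! * (#Z - #Y)! * (n - #Z)! *
        ((#Y).choose #X * (n - #Y).choose (#Z - #Y)) :=
        Nat.mul_le_mul_right _ (card_permChain_through_le hXY hYZ)
    _ = ((#Y).choose #X * (#X)! * (#Y - #X)!) *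
        ((n - #Y).choose (#Z - #Y) * (#Z - #Y)! * (n - #Z)!) := by ring
    _ = _ := by rw [e₁, e₂]

end PermChain

section UpperBound

variable {n t : ℕ} {κ : Type*} [DecidableEq κ] {c : Finset (Fin n) → κ} {k : κ}

def colorPositions (c : Finset (Fin n) → κ) (τ : Perm (Fin n)) (k : κ) : Finset ℕ :=
  {j ∈ range (n + 1) | c (permChain τ j) = k}

theorem mem_colorPositions {τ : Perm (Fin n)} {j : ℕ} :
    j ∈ colorPositions c τ k ↔ j ≤ n ∧ c (permChain τ j) = k := by
  simp [colorPositions]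

def heavyPerms (c : Finset (Fin n) → κ) (k : κ) : Finset (Perm (Fin n)) :=
  {τ | 3 ≤ #(colorPositions c τ k)}

def extremeCount (c : Finset (Fin n) → κ) (k : κ) : ℕ :=
  (if k = c ∅ then 1 else 0) + (if k = c univ then 1 else 0)

theorem sum_extremeCount [Fintype κ] : ∑ k, extremeCount c k = 2 := by
  simp [extremeCount, sum_add_distrib]

theorem card_colorPositions_le_three (hB : ¬HasMonoButterfly c) (τ : Perm (Fin n)) (k : κ) :
    #(colorPositions c τ k) ≤ 3 := by
  by_contra! h
  obtain ⟨f, hf, hfs⟩ := exists_strictMono_of_le_card (m := 4) h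
  have hpos := fun i => mem_colorPositions.mp (hfs i)
  exact hB <| hasMonoButterfly_of_lt_of_lt_of_lt
    (permChain_ssubset τ (hf (show (0 : Fin 4) < 1 by decide)) (hpos 1).1)
    (permChain_ssubset τ (hf (show (1 : Fin 4) < 2 by decide)) (hpos 2).1)
    (permChain_ssubset τ (hf (show (2 : Fin 4) < 3 by decide)) (hpos 3).1)
    ((hpos 1).2.trans (hpos 0).2.symm) ((hpos 2).2.trans (hpos 0).2.symm)
    ((hpos 3).2.trans (hpos 0).2.symm)

theorem exists_isMonoChain3_of_mem_heavyPerms {τ : Perm (Fin n)} (h : τ ∈ heavyPerms c k) :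
    ∃ X Y Z, IsMonoChain3 c k X Y Z ∧
      permChain τ #X = X ∧ permChain τ #Y = Y ∧ permChain τ #Z = Z := by
  obtain ⟨f, hf, hfs⟩ := exists_strictMono_of_le_card (mem_filter.mp h).2
  have hpos := fun i => mem_colorPositions.mp (hfs i)
  refine ⟨permChain τ (f 0), permChain τ (f 1), permChain τ (f 2),
    ⟨permChain_ssubset τ (hf (show (0 : Fin 3) < 1 by decide)) (hpos 1).1,
      permChain_ssubset τ (hf (show (1 : Fin 3) < 2 by decide)) (hpos 2).1,
      (hpos 0).2, (hpos 1).2, (hpos 2).2⟩, ?_, ?_, ?_⟩ <;>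
  rw [card_permChain τ (hpos _).1]

theorem two_le_card_filter_mem_heavyPerms [Fintype κ] (hB : ¬HasMonoButterfly c)
    (hn : n = 2 * Fintype.card κ + 1) (τ : Perm (Fin n)) : 2 ≤ #{k | τ ∈ heavyPerms c k} := by
  simp only [heavyPerms, mem_filter, mem_univ, true_and]
  refine two_le_card_filter_three_le _ (card_colorPositions_le_three hB τ) ?_
  have := card_eq_sum_card_fiberwise (s := range (n + 1)) (t := univ)
    (f := fun j => c (permChain τ j)) fun _ _ => mem_univ _
  rw [card_range] at this
  exact hn ▸ this.symm.ge

theorem mul_card_heavyPerms_le (hB : ¬HasMonoButterfly c) (k : κ) {a b : ℕ}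
    (hw : ∀ X Y Z, IsMonoChain3 c k X Y Z →
      a ≤ b * ((#Y).choose #X * (n - #Y).choose (#Z - #Y))) :
    a * #(heavyPerms c k) ≤ b * n ! := by
  classical
  set M : Finset (Finset (Fin n)) := {Y | ∃ X Z, IsMonoChain3 c k X Y Z}
  have hM : IsAntichain (· ⊆ ·) (M : Set (Finset (Fin n))) := by
    rintro Y hY Y' hY' hne hsub
    obtain ⟨X, Z, h⟩ := (mem_filter.mp hY).2
    obtain ⟨X', Z', h'⟩ := (mem_filter.mp hY').2
    exact hne (h.mid_eq_of_le hB h' hsub)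
  choose! X Z hXZ using fun Y (hY : Y ∈ M) => (mem_filter.mp hY).2
  set T : Finset (Fin n) → Finset (Perm (Fin n)) := fun Y =>
    {τ | permChain τ #(X Y) = X Y ∧ permChain τ #Y = Y ∧ permChain τ #(Z Y) = Z Y}
  have hcover : heavyPerms c k ⊆ M.biUnion T := by
    intro τ hτ
    obtain ⟨X', Y, Z', h, hX', hY, hZ'⟩ := exists_isMonoChain3_of_mem_heavyPerms hτ
    have hYM : Y ∈ M := mem_filter.mpr ⟨mem_univ _, X', Z', h⟩
    obtain ⟨hXe, hZe⟩ := (hXZ Y hYM).ends_eq hB h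
    exact mem_biUnion.mpr ⟨Y, hYM, mem_filter.mpr ⟨mem_univ _, hXe ▸ hX', hY, hZe ▸ hZ'⟩⟩
  have hfiber : ∀ Y ∈ M, a * #(T Y) ≤ b * ((#Y)! * (n - #Y)!) := fun Y hY =>
    calc a * #(T Y) ≤ b * ((#Y).choose #(X Y) * (n - #Y).choose (#(Z Y) - #Y)) * #(T Y) :=
          Nat.mul_le_mul_right _ (hw _ _ _ (hXZ Y hY))
      _ = b * (#(T Y) * ((#Y).choose #(X Y) * (n - #Y).choose (#(Z Y) - #Y))) := by ring
      _ ≤ b * ((#Y)! * (n - #Y)!) := Nat.mul_le_mul_left _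
          (card_permChain_through_mul_choose_le (hXZ Y hY).1.le (hXZ Y hY).2.1.le)
  calc _ ≤ a * ∑ Y ∈ M, #(T Y) :=
        Nat.mul_le_mul_left _ ((card_le_card hcover).trans card_biUnion_le)
    _ ≤ ∑ Y ∈ M, b * ((#Y)! * (n - #Y)!) := by rw [mul_sum]; exact sum_le_sum hfiber
    _ ≤ b * n ! := by
        rw [← mul_sum]
        exact Nat.mul_le_mul_left _
          (by simpa using sum_factorial_mul_factorial_le_of_isAntichain hM)

theorem IsMonoChain3.two_mul_le_mul_choose_mul_choose (hn : n = 2 * t + 1)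
    {X Y Z : Finset (Fin n)} (h : IsMonoChain3 c k X Y Z) :
    2 * t ≤ (1 + t * extremeCount c k) * ((#Y).choose #X * (n - #Y).choose (#Z - #Y)) := by
  obtain ⟨hXY, hYZ, hX, -, hZ⟩ := h
  have hxy := card_lt_card hXY
  have hyz := card_lt_card hYZ
  have hzn : #Z ≤ n := by simpa using card_le_univ Z
  set p := (#Y).choose #X
  set q := (n - #Y).choose (#Z - #Y)
  have hp₀ : 0 < p := choose_pos hxy.le
  have hq₀ : 0 < q := choose_pos (by omega)
  have hp : k ≠ c ∅ → 2 ≤ #Y ∧ #Y ≤ p := fun hk => by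
    have hX₀ : 0 < #X := card_pos.mpr (nonempty_iff_ne_empty.mpr fun h => hk (h ▸ hX.symm))
    exact ⟨by omega, le_choose_of_pos_of_lt hX₀ hxy⟩
  have hq : k ≠ c univ → 2 ≤ n - #Y ∧ n - #Y ≤ q := fun hk => by
    have hZn := (card_lt_iff_ne_univ Z).mpr fun h => hk (h ▸ hZ.symm)
    rw [Fintype.card_fin] at hZn
    exact ⟨by omega, le_choose_of_pos_of_lt (by omega) (by omega)⟩
  unfold extremeCount
  split_ifs with h₀ h₁ h₁
  · nlinarith [Nat.mul_pos hp₀ hq₀]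
  · nlinarith [Nat.mul_le_mul hp₀ ((hq h₁).1.trans (hq h₁).2)]
  · nlinarith [Nat.mul_le_mul ((hp h₀).1.trans (hp h₀).2) hq₀]
  · obtain ⟨hy, hyp⟩ := hp h₀
    obtain ⟨hm, hmq⟩ := hq h₁
    have : #Y + (n - #Y) = 2 * t + 1 := by omega
    nlinarith [Nat.mul_le_mul hyp hmq]

theorem hasMonoButterfly_of_card_eq [Fintype κ] (hn : n = 2 * Fintype.card κ + 1)
    (c : Finset (Fin n) → κ) : HasMonoButterfly c := by
  by_contra hB
  set t := Fintype.card κ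
  have ht : 0 < t := Fintype.card_pos_iff.mpr ⟨c ∅⟩
  have hlow : 2 * n ! ≤ ∑ k, #(heavyPerms c k) :=
    calc 2 * n ! = ∑ _τ : Perm (Fin n), 2 := by simp [Fintype.card_perm, mul_comm]
      _ ≤ ∑ τ : Perm (Fin n), #{k | τ ∈ heavyPerms c k} :=
          sum_le_sum fun τ _ => two_le_card_filter_mem_heavyPerms hB hn τ
      _ = ∑ k, #(heavyPerms c k) := (sum_card_bipartiteAbove_eq_sum_card_bipartiteBelow
          (r := fun k τ => τ ∈ heavyPerms c k)).symm.trans (by simp [bipartiteAbove, heavyPerms])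
  have hup : ∀ k, 2 * t * #(heavyPerms c k) ≤ (1 + t * extremeCount c k) * n ! := fun k =>
    mul_card_heavyPerms_le hB k fun _ _ _ h => h.two_mul_le_mul_choose_mul_choose hn
  have : 2 * t * (2 * n !) ≤ 3 * t * n ! :=
    calc _ ≤ 2 * t * ∑ k, #(heavyPerms c k) := Nat.mul_le_mul_left _ hlow
      _ = ∑ k, 2 * t * #(heavyPerms c k) := mul_sum _ _ _
      _ ≤ ∑ k, (1 + t * extremeCount c k) * n ! := sum_le_sum fun k _ => hup k
      _ = 3 * t * n ! := by
          rw [← sum_mul, sum_add_distrib, ← mul_sum, sum_extremeCount, sum_const,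
            Finset.card_univ, smul_eq_mul]
          ring
  have := factorial_pos n
  nlinarith

end UpperBound

/-- `BR^1_t(⋈) = 2t + 1`: for every `t ≥ 1`, `2t+1` is the least `N`
such that every `t`-coloring of the elements of the Boolean lattice `B_N`
contains a monochromatic copy of the butterfly poset, i.e. four distinct subsets
`X₁, X₂, Y₁, Y₂` of the same color with `Xᵢ ⊆ Yⱼ` for all `i, j`. -/
theorem boolean_ramsey_butterfly
    (t : ℕ) (ht : 1 ≤ t) :
    IsLeast
      {N : ℕ | ∀ c : Finset (Fin N) → Fin t,
        ∃ X₁ X₂ Y₁ Y₂ : Finset (Fin N),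
          X₁ ≠ X₂ ∧ X₁ ≠ Y₁ ∧ X₁ ≠ Y₂ ∧ X₂ ≠ Y₁ ∧ X₂ ≠ Y₂ ∧ Y₁ ≠ Y₂ ∧
          X₁ ⊆ Y₁ ∧ X₁ ⊆ Y₂ ∧ X₂ ⊆ Y₁ ∧ X₂ ⊆ Y₂ ∧
          c X₂ = c X₁ ∧ c Y₁ = c X₁ ∧ c Y₂ = c X₁}
      (2 * t + 1) := by
  refine ⟨fun c => hasMonoButterfly_of_card_eq (by simp) c, fun N hN => ?_⟩
  by_contra! hlt
  exact not_hasMonoButterfly_pairedLevelColoring ht (by simpa using Nat.lt_succ_iff.mp hlt) (hN _)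
end

section
/- For all integers d ≥ 1 and t ≥ 1, every t-coloring of the elements of the Boolean lattice B_{2d²t} contains a monochromatic copy of the Boolean lattice B_d. (That is, BR^1_t(B_d) ≤ 2d²t.) -/
/-!
View the ground set as `m = 2dt` consecutive blocks of `d` points. For a block `j` and a proper
subset `W` of its points, the cell `(j, W)` is the union of all earlier blocks with `W`; cells of
different blocks are distinct, and those of earlier blocks are contained in those of later ones.
By pigeonhole one colour owns at least `2d(2^d - 1)` of the `m(2^d - 1)` cells. Cutting the
blocks greedily into `d + 1` consecutive groups, group `ℓ` holding at least `C(d, ℓ)` cells of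
that colour, wastes at most `2^d - 2` cells per group, and `2^d + (d + 1)(2^d - 2) ≤ 2d(2^d - 1)`.
Sending the `ℓ`-subsets of `[d]` injectively to cells of group `ℓ` gives the copy of `B_d`: a
proper inclusion raises the size, hence the group, hence the block.
-/

open Finset Function

namespace BooleanRamsey

lemma exists_le_apply_le_add_of_step_le {N : ℕ → ℕ} {w : ℕ} (h0 : N 0 = 0)
    (hstep : ∀ j, N (j + 1) ≤ N j + (w + 1)) {T : ℕ} :
    ∀ K, T ≤ N K → ∃ J, T ≤ N J ∧ N J ≤ T + w
  | 0, hK => ⟨0, hK, by omega⟩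
  | K + 1, hK => by
    by_cases hT : T ≤ N K
    · exact exists_le_apply_le_add_of_step_le h0 hstep K hT
    · exact ⟨K + 1, hK, by have := hstep K; omega⟩

variable {α : Type*}

lemma exists_increasing_layers (blk : α → ℕ) (w : ℕ) (r : ℕ → ℕ) (L : ℕ) :
    ∀ (G : Finset α), (∀ j, #{a ∈ G | blk a = j} ≤ w + 1) →
      ∑ ℓ ∈ range L, (r ℓ + w) ≤ #G →
      ∃ S : ℕ → Finset α, (∀ ℓ, S ℓ ⊆ G) ∧ (∀ ℓ < L, r ℓ ≤ #(S ℓ)) ∧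
        ∀ ℓ ℓ', ℓ < ℓ' → ∀ a ∈ S ℓ, ∀ a' ∈ S ℓ', blk a < blk a' := by
  induction L generalizing r with
  | zero => exact fun _ _ _ => ⟨fun _ => ∅, by simp, by simp, by simp⟩
  | succ L ih =>
    intro G hfib hG
    rw [sum_range_succ'] at hG
    set N : ℕ → ℕ := fun J => #{a ∈ G | blk a < J}
    have hstep (j : ℕ) : N (j + 1) ≤ N j + (w + 1) := by
      classical
      calc N (j + 1) ≤ #({a ∈ G | blk a < j} ∪ {a ∈ G | blk a = j}) :=
            card_le_card fun a => by grind
        _ ≤ N j + (w + 1) := (card_union_le _ _).trans (by grw [hfib j])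
    have hNG : N (G.sup blk + 1) = #G :=
      congrArg card (filter_true_of_mem fun a ha => Nat.lt_succ_of_le (le_sup ha))
    obtain ⟨J, hJr, hJw⟩ := exists_le_apply_le_add_of_step_le (T := r 0) (by simp [N]) hstep
      (G.sup blk + 1) (by omega)
    have hsplit := card_filter_add_card_filter_not (s := G) (fun a => blk a < J)
    obtain ⟨S, hSG, hSr, hSlt⟩ := ih (fun ℓ => r (ℓ + 1)) {a ∈ G | ¬ blk a < J}
      (fun j => (card_le_card (filter_subset_filter _ (filter_subset _ _))).trans (hfib j))
      (by simp only [N] at hJw; omega)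
    refine ⟨fun | 0 => {a ∈ G | blk a < J} | ℓ + 1 => S ℓ, ?_, ?_, ?_⟩
    · rintro (_ | ℓ)
      · exact filter_subset _ _
      · exact (hSG ℓ).trans (filter_subset _ _)
    · rintro (_ | ℓ) hℓ
      · exact hJr
      · exact hSr ℓ (by omega)
    · rintro (_ | ℓ) (_ | ℓ') h a ha a' ha'
      · omega
      · have := (mem_filter.1 (hSG ℓ' ha')).2
        have := (mem_filter.1 ha).2
        omega
      · omega
      · exact hSlt ℓ ℓ' (by omega) a ha a' ha'

lemma exists_injective_mem_of_card_fiber_le {β : Type*} [Fintype β] (rank : β → ℕ)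
    (S : ℕ → Finset α) (hS : Pairwise (Disjoint on S))
    (hcard : ∀ ℓ, #{b | rank b = ℓ} ≤ #(S ℓ)) :
    ∃ f : β → α, Injective f ∧ ∀ b, f b ∈ S (rank b) := by
  rcases isEmpty_or_nonempty α with hα | hα
  · have : IsEmpty β := ⟨fun b => by
      have := (card_pos.2 ⟨b, by simp⟩).trans_le (hcard (rank b))
      simp [eq_empty_of_isEmpty (S (rank b))] at this⟩
    exact ⟨isEmptyElim, injective_of_subsingleton _, isEmptyElim⟩
  have hlevel (ℓ : ℕ) :
      ∃ g : β → α, {b | rank b = ℓ} ⊆ g ⁻¹' S ℓ ∧ Set.InjOn g {b | rank b = ℓ} :=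
    (Set.toFinite _).exists_injOn_of_encard_le (by
      have := hcard ℓ
      rw [← Nat.cast_le (α := ℕ∞), ← Set.encard_coe_eq_coe_finsetCard, coe_filter] at this
      simpa using this)
  choose g hgS hginj using hlevel
  refine ⟨fun b => g (rank b) b, fun b b' (h : g (rank b) b = g (rank b') b') => ?_,
    fun b => hgS _ rfl⟩
  have hrank : rank b = rank b' := by
    by_contra hne
    exact disjoint_left.1 (hS hne) (hgS _ rfl) (h ▸ hgS _ rfl)
  rw [hrank] at h
  exact hginj (rank b') hrank rfl h

section Cells

variable {ι κ : Type*} [LinearOrder ι] [Fintype ι] [Fintype κ] [DecidableEq κ]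

def cell (j : ι) (W : Finset κ) : Finset (ι × κ) := {p | p.1 < j ∨ p.1 = j ∧ p.2 ∈ W}

lemma mem_cell {j : ι} {W : Finset κ} {p : ι × κ} :
    p ∈ cell j W ↔ p.1 < j ∨ p.1 = j ∧ p.2 ∈ W := by
  simp [cell]

lemma cell_subset_cell {j j' : ι} (h : j < j') (W W' : Finset κ) : cell j W ⊆ cell j' W' := by
  intro p hp
  rw [mem_cell] at hp ⊢
  left
  rcases hp with hp | ⟨hp, -⟩
  · exact hp.trans h
  · exact hp ▸ h

lemma cell_ne_cell_of_lt {j j' : ι} (h : j < j') {W : Finset κ} (hW : W ≠ univ)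
    (W' : Finset κ) : cell j W ≠ cell j' W' := by
  obtain ⟨x, hx⟩ : ∃ x, x ∉ W := by simpa [eq_univ_iff_forall] using hW
  intro hcell
  have : (j, x) ∈ cell j' W' := mem_cell.2 (Or.inl h)
  rw [← hcell, mem_cell] at this
  simp_all

lemma cell_inj {j j' : ι} {W W' : Finset κ} (hW : W ≠ univ) (hW' : W' ≠ univ) :
    cell j W = cell j' W' ↔ j = j' ∧ W = W' := by
  refine ⟨fun h => ?_, by rintro ⟨rfl, rfl⟩; rfl⟩
  obtain rfl : j = j' := by
    rcases lt_trichotomy j j' with hj | hj | hj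
    · exact absurd h (cell_ne_cell_of_lt hj hW W')
    · exact hj
    · exact absurd h.symm (cell_ne_cell_of_lt hj hW' W)
  refine ⟨rfl, ext fun x => ?_⟩
  simpa [mem_cell] using congrArg ((j, x) ∈ ·) h

end Cells

lemma sum_choose_add_two_pow_sub_two_le {d : ℕ} (hd : 1 ≤ d) :
    ∑ ℓ ∈ range (d + 1), (d.choose ℓ + (2 ^ d - 2)) ≤ 2 * d * (2 ^ d - 1) := by
  rw [sum_add_distrib, Nat.sum_range_choose, sum_const, card_range, smul_eq_mul]
  obtain rfl | hd2 : d = 1 ∨ 2 ≤ d := by omega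
  · simp
  have h4 : 4 ≤ 2 ^ d := by simpa using Nat.pow_le_pow_right two_pos hd2
  obtain ⟨x, hx⟩ : ∃ x, 2 ^ d = x + 4 := ⟨2 ^ d - 4, by omega⟩
  rw [hx, show x + 4 - 2 = x + 2 by omega, show x + 4 - 1 = x + 3 by omega]
  nlinarith

lemma card_filter_card_eq (d ℓ : ℕ) : #{U : Finset (Fin d) | #U = ℓ} = d.choose ℓ := by
  calc #{U : Finset (Fin d) | #U = ℓ} = #(powersetCard ℓ (univ : Finset (Fin d))) := by
        congr 1
        ext U
        simp
    _ = d.choose ℓ := by rw [card_powersetCard, card_univ, Fintype.card_fin]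

def properCells (m d : ℕ) : Finset (Fin m × Finset (Fin d)) :=
  univ ×ˢ (univ : Finset (Finset (Fin d))).erase univ

lemma card_properCells (m d : ℕ) : #(properCells m d) = m * (2 ^ d - 1) := by
  rw [properCells, card_product, card_erase_of_mem (mem_univ _), card_univ, card_univ,
    Fintype.card_finset, Fintype.card_fin, Fintype.card_fin]

lemma card_filter_fst_eq_le {m d : ℕ} {G : Finset (Fin m × Finset (Fin d))}
    (hG : G ⊆ properCells m d) (j : ℕ) : #{p ∈ G | (p.1 : ℕ) = j} ≤ 2 ^ d - 1 := by
  calc #{p ∈ G | (p.1 : ℕ) = j} ≤ #((univ : Finset (Finset (Fin d))).erase univ) :=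
        card_le_card_of_injOn Prod.snd
          (fun p hp => (mem_product.1 (hG (mem_filter.1 hp).1)).2)
          (fun p hp q hq h => Prod.ext (Fin.ext (by
            simp only [coe_filter, Set.mem_ofPred_eq] at hp hq; omega)) h)
    _ = 2 ^ d - 1 := by
      rw [card_erase_of_mem (mem_univ _), card_univ, Fintype.card_finset, Fintype.card_fin]

lemma exists_color_le_card_cells {d m t : ℕ} (hm : 2 * d * t ≤ m)
    (c : Finset (Fin m × Fin d) → Fin t) :
    ∃ i, 2 * d * (2 ^ d - 1) ≤ #{p ∈ properCells m d | c (cell p.1 p.2) = i} := by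
  have hcard : #(univ : Finset (Fin t)) * (2 * d * (2 ^ d - 1)) ≤ #(properCells m d) := by
    rw [card_properCells, card_univ, Fintype.card_fin]
    calc t * (2 * d * (2 ^ d - 1)) = 2 * d * t * (2 ^ d - 1) := by ring
      _ ≤ m * (2 ^ d - 1) := Nat.mul_le_mul_right _ hm
  obtain ⟨i, -, hi⟩ := exists_le_card_fiber_of_mul_le_card_of_maps_to
    (fun _ _ => mem_univ _) ⟨c ∅, mem_univ _⟩ hcard
  exact ⟨i, hi⟩

theorem exists_monochromatic_copy_of_two_mul_mul_le {d m t : ℕ} (hd : 1 ≤ d)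
    (hm : 2 * d * t ≤ m) (c : Finset (Fin m × Fin d) → Fin t) :
    ∃ (i : Fin t) (f : Finset (Fin d) → Finset (Fin m × Fin d)), Injective f ∧
      (∀ S T : Finset (Fin d), S ⊆ T → f S ⊆ f T) ∧ ∀ S, c (f S) = i := by
  obtain ⟨i, hi⟩ := exists_color_le_card_cells hm c
  set G := {p ∈ properCells m d | c (cell p.1 p.2) = i}
  have hfib (j : ℕ) : #{p ∈ G | (p.1 : ℕ) = j} ≤ (2 ^ d - 2) + 1 := by
    have hpow : 2 ≤ 2 ^ d := Nat.le_self_pow (by omega) 2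
    have := card_filter_fst_eq_le (G := G) (filter_subset _ _) j
    omega
  obtain ⟨S, hSG, hSr, hSlt⟩ := exists_increasing_layers (fun p => (p.1 : ℕ)) (2 ^ d - 2)
    d.choose (d + 1) G hfib ((sum_choose_add_two_pow_sub_two_le hd).trans hi)
  have hS : Pairwise (Disjoint on S) := by
    intro ℓ ℓ' hne
    refine disjoint_left.2 fun p hp hp' => ?_
    rcases hne.lt_or_gt with h | h
    · exact lt_irrefl _ (hSlt ℓ ℓ' h p hp p hp')
    · exact lt_irrefl _ (hSlt ℓ' ℓ h p hp' p hp)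
  obtain ⟨g, hginj, hgS⟩ := exists_injective_mem_of_card_fiber_le Finset.card S hS fun ℓ => by
    rw [card_filter_card_eq]
    rcases Nat.lt_or_ge ℓ (d + 1) with hℓ | hℓ
    · exact hSr ℓ hℓ
    · simp [Nat.choose_eq_zero_of_lt (by omega : d < ℓ)]
  have hgG (U : Finset (Fin d)) : (g U).2 ≠ univ ∧ c (cell (g U).1 (g U).2) = i := by
    simpa [G, properCells] using hSG _ (hgS U)
  refine ⟨i, fun U => cell (g U).1 (g U).2, fun U U' h => ?_, fun U U' hUU' => ?_,
    fun U => (hgG U).2⟩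
  · obtain ⟨h1, h2⟩ := (cell_inj (hgG U).1 (hgG U').1).1 h
    exact hginj (Prod.ext h1 h2)
  · obtain rfl | hlt := eq_or_ssubset_of_subset hUU'
    · rfl
    · have : (g U).1 < (g U').1 := hSlt _ _ (Finset.card_lt_card hlt) _ (hgS U) _ (hgS U')
      exact cell_subset_cell this _ _

end BooleanRamsey

theorem boolean_ramsey_Bd_upper_general (d t : ℕ) (hd : 1 ≤ d) :
    ∀ c : Finset (Fin (2 * d ^ 2 * t)) → Fin t,
      ∃ (i : Fin t) (f : Finset (Fin d) → Finset (Fin (2 * d ^ 2 * t))),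
        Function.Injective f ∧
        (∀ S T : Finset (Fin d), S ⊆ T → f S ⊆ f T) ∧
        (∀ S : Finset (Fin d), c (f S) = i) := by
  intro c
  let e : Fin (2 * d * t) × Fin d ≃ Fin (2 * d ^ 2 * t) :=
    finProdFinEquiv.trans (finCongr (by ring))
  obtain ⟨i, f, hinj, hmono, hcol⟩ := BooleanRamsey.exists_monochromatic_copy_of_two_mul_mul_le
    hd le_rfl fun S => c (S.map e.toEmbedding)
  exact ⟨i, fun S => (f S).map e.toEmbedding, (Finset.map_injective _).comp hinj,
    fun S T h => Finset.map_subset_map.2 (hmono S T h), hcol⟩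

/-- `BR^1_t(B_d) ≤ 2d²t`: for all `d, t ≥ 1`, every `t`-coloring of the
elements of the Boolean lattice `B_{2d²t}` contains a monochromatic copy of the
Boolean lattice `B_d`. -/
theorem boolean_ramsey_Bd_upper (d t : ℕ) (hd : 1 ≤ d) (ht : 1 ≤ t) :
    ∀ c : Finset (Fin (2 * d ^ 2 * t)) → Fin t,
      ∃ (i : Fin t) (f : Finset (Fin d) → Finset (Fin (2 * d ^ 2 * t))),
        Function.Injective f ∧
        (∀ S T : Finset (Fin d), S ⊆ T → f S ⊆ f T) ∧
        (∀ S : Finset (Fin d), c (f S) = i) :=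
  boolean_ramsey_Bd_upper_general d t hd
end

section
/- Let k ≥ 2 and let G_1, …, G_t be k-uniform pographs. Then: (i) if N is an integer such that every t-coloring of the k-chains of the chain C_N contains a copy of G_i in color i for some i, then every t-coloring of the k-chains of the Boolean lattice B_{N−1} contains a copy of G_i in color i for some i (so BR^k(G_1,…,G_t) ≤ CR^k(G_1,…,G_t) − 1); and (ii) if n is an integer such that every t-coloring of the k-chains of B_n contains a copy of G_i in color i for some i, then every t-coloring of the k-chains of the chain C_{2^n} contains a copy of G_i in color i for some i (so log_2 CR^k(G_1,…,G_t) ≤ BR^k(G_1,…,G_t)). -/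
/-!
Both inequalities come from injective monotone maps between the host posets, since pulling a
coloring back along such a map turns copies in the source into copies in the target. The chain
`C_N` embeds into `B_{N-1}` by `a ↦ {j | j < a}`, and `B_n` maps into `C_{2^n}` by binary
expansion `S ↦ ∑ j ∈ S, 2^j`, which is injective and monotone (though not an order embedding).
-/

def HasPographCopy {Q : Type*} [Preorder Q] {V : Type*} [Preorder V]
    {k t : ℕ} (E : Set (Fin k → V)) (c : (Fin k → Q) → Fin t) (i : Fin t) : Prop :=
  ∃ f : V → Q,
    Function.Injective f ∧
    (∀ x y : V, x ≤ y → f x ≤ f y) ∧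
    (∀ e ∈ E, c (f ∘ e) = i)

open Finset

theorem HasPographCopy.of_comp {Q Q' V : Type*} [Preorder Q] [Preorder Q'] [Preorder V]
    {k t : ℕ} {E : Set (Fin k → V)} {c : (Fin k → Q') → Fin t} {i : Fin t}
    {g : Q → Q'} (hg : Function.Injective g) (hg' : Monotone g)
    (h : HasPographCopy E (fun e => c (g ∘ e)) i) : HasPographCopy E c i := by
  obtain ⟨f, hf, hf', hcol⟩ := h
  exact ⟨g ∘ f, hg.comp hf, fun x y hxy => hg' (hf' x y hxy), hcol⟩

theorem exists_hasPographCopy_of_injective_monotone {Q Q' : Type*} [Preorder Q] [Preorder Q']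
    {k t : ℕ} {V : Fin t → Type*} [∀ i, Preorder (V i)] {E : ∀ i, Set (Fin k → V i)}
    {g : Q → Q'} (hg : Function.Injective g) (hg' : Monotone g)
    (hQ : ∀ c : (Fin k → Q) → Fin t, ∃ i, HasPographCopy (E i) c i)
    (c : (Fin k → Q') → Fin t) : ∃ i, HasPographCopy (E i) c i := by
  obtain ⟨i, hi⟩ := hQ (fun e => c (g ∘ e))
  exact ⟨i, hi.of_comp hg hg'⟩

def Fin.initialSegment (N : ℕ) (a : Fin N) : Finset (Fin (N - 1)) :=
  univ.filter fun j => (j : ℕ) < a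

theorem Fin.strictMono_initialSegment (N : ℕ) : StrictMono (Fin.initialSegment N) := by
  intro a b hab
  refine (ssubset_iff_of_subset fun j hj => ?_).mpr ?_
  · simp only [Fin.initialSegment, mem_filter, mem_univ, true_and] at hj ⊢
    exact hj.trans hab
  · have ha : (a : ℕ) < N - 1 := by have := b.isLt; have : (a : ℕ) < b := hab; omega
    exact ⟨⟨a, ha⟩, by simpa [Fin.initialSegment] using hab, by simp [Fin.initialSegment]⟩

def Finset.binaryValue (n : ℕ) (S : Finset (Fin n)) : Fin (2 ^ n) :=
  ⟨∑ j ∈ S.map Fin.valEmbedding, 2 ^ j, Nat.geomSum_lt le_rfl (by simp)⟩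

theorem Finset.binaryValue_injective (n : ℕ) : Function.Injective (Finset.binaryValue n) :=
  fun _ _ h => map_injective Fin.valEmbedding (geomSum_injective le_rfl (congrArg Fin.val h))

theorem Finset.binaryValue_monotone (n : ℕ) : Monotone (Finset.binaryValue n) :=
  fun _ _ h => Fin.mk_le_mk.mpr (sum_le_sum_of_subset (map_subset_map.mpr h))

theorem boolean_vs_chain_ramsey_general
    (k t : ℕ)
    (V : Fin t → Type) [∀ i, PartialOrder (V i)]
    (E : ∀ i, Set (Fin k → V i)) :
    (∀ N : ℕ,
      (∀ c : (Fin k → Fin N) → Fin t, ∃ i, HasPographCopy (E i) c i) →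
      (∀ c : (Fin k → Finset (Fin (N - 1))) → Fin t, ∃ i, HasPographCopy (E i) c i)) ∧
    (∀ n : ℕ,
      (∀ c : (Fin k → Finset (Fin n)) → Fin t, ∃ i, HasPographCopy (E i) c i) →
      (∀ c : (Fin k → Fin (2 ^ n)) → Fin t, ∃ i, HasPographCopy (E i) c i)) :=
  ⟨fun N => exists_hasPographCopy_of_injective_monotone
      (Fin.strictMono_initialSegment N).injective (Fin.strictMono_initialSegment N).monotone,
    fun n => exists_hasPographCopy_of_injective_monotone
      (Finset.binaryValue_injective n) (Finset.binaryValue_monotone n)⟩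

/-- `log₂ CR^k(G_1,…,G_t) ≤ BR^k(G_1,…,G_t) ≤ CR^k(G_1,…,G_t) − 1`.
(i) If every `t`-coloring of the `k`-chains of the chain `C_N` contains a copy of
`G i` in color `i` for some `i`, then so does every `t`-coloring of the `k`-chains
of the Boolean lattice `B_{N−1}`.
(ii) If every `t`-coloring of the `k`-chains of `B_n` contains a copy of `G i` in
color `i` for some `i`, then so does every `t`-coloring of the `k`-chains of the
chain `C_{2^n}`. -/
theorem boolean_vs_chain_ramsey
    (k t : ℕ) (hk : 2 ≤ k)
    (V : Fin t → Type) [∀ i, PartialOrder (V i)] [∀ i, Fintype (V i)]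
    (E : ∀ i, Set (Fin k → V i)) (hE : ∀ i, ∀ e ∈ E i, StrictMono e) :
    (∀ N : ℕ,
      (∀ c : (Fin k → Fin N) → Fin t, ∃ i, HasPographCopy (E i) c i) →
      (∀ c : (Fin k → Finset (Fin (N - 1))) → Fin t, ∃ i, HasPographCopy (E i) c i)) ∧
    (∀ n : ℕ,
      (∀ c : (Fin k → Finset (Fin n)) → Fin t, ∃ i, HasPographCopy (E i) c i) →
      (∀ c : (Fin k → Fin (2 ^ n)) → Fin t, ∃ i, HasPographCopy (E i) c i)) :=
  boolean_vs_chain_ramsey_general k t V E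
end

section
/- Let k ≥ 2 and m_1 ≥ m_2 ≥ … ≥ m_t ≥ 1 be integers. Then: (i) for every integer n with 2^n < k·m_1 + ∑_{i=2}^t (m_i − 1), there exists a t-coloring of the k-chains of the Boolean lattice B_n containing no copy of the k-uniform matching of size m_i in color i for any i; and (ii) for N = ⌈log_2(1 + ∑_{i=1}^t (m_i − 1))⌉ + k − 1, every t-coloring of the k-chains of B_N contains a copy of the k-uniform matching of size m_i in color i for some i. (That is, log_2(k m_1 + ∑_{i=2}^t (m_i−1)) ≤ BR^k(M^k_{m_1},…,M^k_{m_t}) ≤ ⌈log_2(1 + ∑_{i=1}^t (m_i−1))⌉ + k − 1.) -/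
/-! Lower bound: list the subsets of `[n]` along a linear extension of `⊆` and colour a
`k`-chain by the position of its top set, giving colour `0` to the first `k m₀ - 1` positions
and colour `i ≥ 1` to the next `m_i - 1`. Colour class `0` is then a down-set, so a colour-`0`
matching would put `k m₀` distinct sets into it; a colour-`i` matching would need `m_i`
distinct tops.

Upper bound: for `S ⊆ [n₀]` the sets `S ∪ {n₀, …, n₀ + j - 1}`, `j < k`, form `2 ^ n₀`
pairwise disjoint `k`-chains in `B_{n₀+k-1}`, and `2 ^ n₀ > ∑ (m_i - 1)` forces, by
pigeonhole, `m_i` of them to share some colour `i`. -/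

open Finset Function

/-- A copy of the `k`-uniform matching of size `mm` in color `i`, inside the Boolean
lattice `B_n` whose `k`-tuples are colored by `c`: `mm` strictly increasing
`k`-chains of subsets, all `mm·k` subsets pairwise distinct, each `k`-chain having
color `i`. -/
def HasMatchingCopy {n k t : ℕ} (mm : ℕ)
    (c : (Fin k → Finset (Fin n)) → Fin t) (i : Fin t) : Prop :=
  ∃ A : Fin mm → Fin k → Finset (Fin n),
    (∀ j, StrictMono (A j)) ∧
    Function.Injective (fun p : Fin mm × Fin k => A p.1 p.2) ∧
    (∀ j, c (A j) = i)

lemma exists_le_card_fiber_of_sum_pred_lt {ι α : Type*} [Fintype ι] [Fintype α] [DecidableEq α]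
    (f : ι → α) (m : α → ℕ) (h : ∑ a, (m a - 1) < Fintype.card ι) :
    ∃ a, m a ≤ #{x | f x = a} := by
  by_contra! hlt
  have : Fintype.card ι ≤ ∑ a, (m a - 1) := by
    rw [← card_univ, card_eq_sum_card_fiberwise fun x _ => mem_univ (f x)]
    exact sum_le_sum fun a _ => Nat.le_sub_one_of_lt (hlt a)
  omega

lemma finSigmaFinEquiv_symm_fst_eq_zero_iff {t : ℕ} {a : Fin (t + 1) → ℕ} (p : Fin (∑ i, a i)) :
    (finSigmaFinEquiv.symm p).1 = 0 ↔ (p : ℕ) < a 0 := by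
  constructor
  · intro h
    obtain ⟨⟨i, j⟩, rfl⟩ := finSigmaFinEquiv.surjective p
    rw [Equiv.symm_apply_apply] at h
    subst h
    have : IsEmpty (Fin ((0 : Fin (t + 1)) : ℕ)) := by rw [Fin.val_zero]; infer_instance
    rw [finSigmaFinEquiv_apply, Fintype.sum_empty, zero_add]
    exact j.2
  · intro h
    rw [show p = finSigmaFinEquiv ⟨0, ⟨p, h⟩⟩ from Fin.ext (by simp), Equiv.symm_apply_apply]

lemma exists_coloring_isLowerSet_card_fiber_le {α : Type*} [PartialOrder α] [Fintype α] {t : ℕ}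
    (a : Fin (t + 1) → ℕ) (h : Fintype.card α ≤ ∑ i, a i) :
    ∃ χ : α → Fin (t + 1), IsLowerSet {x | χ x = 0} ∧ ∀ i, #{x | χ x = i} ≤ a i := by
  let _ : Fintype (LinearExtension α) := inferInstanceAs (Fintype α)
  let e := (Fintype.orderIsoFinOfCardEq (LinearExtension α) rfl).symm
  let r : α → Fin (∑ i, a i) := fun x => Fin.castLE h (e (toLinearExtension x))
  have hr_mono : Monotone r := fun x y hxy =>
    (Fin.castLE_le_castLE_iff h).2 (e.monotone (toLinearExtension.monotone hxy))
  have hr_inj : Injective r := fun x y hxy => e.injective (Fin.castLE_injective h hxy)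
  refine ⟨fun x => (finSigmaFinEquiv.symm (r x)).1, fun x y hyx hx => ?_, fun i => ?_⟩
  · simp only [Set.mem_ofPred_eq, finSigmaFinEquiv_symm_fst_eq_zero_iff] at hx ⊢
    exact (Fin.le_def.1 (hr_mono hyx)).trans_lt hx
  · rw [← Fintype.card_subtype, ← Fintype.card_fin (a i)]
    exact (Fintype.card_le_of_injective (fun x => ⟨finSigmaFinEquiv.symm (r x.1), x.2⟩)
      fun x y hxy => Subtype.ext (hr_inj (finSigmaFinEquiv.symm.injective
        (congrArg Subtype.val hxy)))).trans_eq (Fintype.card_congr (Equiv.sigmaSubtype i))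

section TopColoring

variable {n k T mm : ℕ} {χ : Finset (Fin n) → Fin T} {i : Fin T}

lemma HasMatchingCopy.le_card_fiber_top
    (hc : HasMatchingCopy mm (fun A : Fin (k + 1) → Finset (Fin n) => χ (A (Fin.last k))) i) :
    mm ≤ #{S | χ S = i} := by
  obtain ⟨A, -, hinj, hcol⟩ := hc
  simpa using card_le_card_of_injOn (s := univ) (t := {S | χ S = i}) (fun j => A j (Fin.last k))
    (fun j _ => by simpa using hcol j)
    (fun p _ q _ hpq => congrArg Prod.fst (@hinj (p, Fin.last k) (q, Fin.last k) hpq))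

lemma HasMatchingCopy.mul_le_card_fiber_top (hχ : IsLowerSet {S | χ S = i})
    (hc : HasMatchingCopy mm (fun A : Fin (k + 1) → Finset (Fin n) => χ (A (Fin.last k))) i) :
    (k + 1) * mm ≤ #{S | χ S = i} := by
  obtain ⟨A, hmono, hinj, hcol⟩ := hc
  have hmem : ∀ p : Fin mm × Fin (k + 1), χ (A p.1 p.2) = i := fun p =>
    hχ ((hmono p.1).monotone (Fin.le_last p.2)) (hcol p.1)
  simpa [mul_comm] using card_le_card_of_injOn (s := univ) (t := {S | χ S = i})
    (fun p : Fin mm × Fin (k + 1) => A p.1 p.2) (fun p _ => by simpa using hmem p) hinj.injOn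

end TopColoring

lemma HasMatchingCopy.of_le_card_fiber {n k T mm : ℕ} {ι : Type*} [Fintype ι]
    (c : (Fin k → Finset (Fin n)) → Fin T) {D : ι → Fin k → Finset (Fin n)}
    (hD : ∀ b, StrictMono (D b)) (hDinj : Injective fun p : ι × Fin k => D p.1 p.2) {i : Fin T}
    (h : mm ≤ #{b | c (D b) = i}) : HasMatchingCopy mm c i := by
  rw [← Fintype.card_subtype, ← Fintype.card_fin mm] at h
  obtain ⟨φ⟩ := Embedding.nonempty_of_card_le h
  refine ⟨fun j => D (φ j), fun j => hD _, fun p q hpq => ?_, fun j => (φ j).2⟩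
  have hpq' := @hDinj ((φ p.1 : ι), p.2) ((φ q.1 : ι), q.2) hpq
  simp only [Prod.mk.injEq] at hpq'
  exact Prod.ext (φ.injective (Subtype.ext hpq'.1)) hpq'.2

lemma exists_disjoint_chains (n k : ℕ) :
    ∃ D : Finset (Fin n) → Fin (k + 1) → Finset (Fin (n + k)),
      (∀ S, StrictMono (D S)) ∧ Injective fun p : Finset (Fin n) × Fin (k + 1) => D p.1 p.2 := by
  let E : Fin (k + 1) → Finset (Fin k) := fun j => {x | (x : ℕ) < j}
  have hE : StrictMono E := by
    intro j j' hjj'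
    rw [ssubset_iff_of_subset fun x hx => by simp_all [E]; omega]
    exact ⟨⟨j, by omega⟩, by simp [E]; omega, by simp [E]⟩
  refine ⟨fun S j => (S.disjSum (E j)).map finSumFinEquiv.toEmbedding,
    fun S => (mapEmbedding _).strictMono.comp ((disjSum_strictMono_right S).comp hE), ?_⟩
  rintro ⟨S, j⟩ ⟨S', j'⟩ h
  simp only [map_inj, disjSum_inj] at h
  exact Prod.ext h.1 (hE.injective h.2)

theorem boolean_ramsey_matchings_general
    (k t : ℕ) (hk : 2 ≤ k)
    (m : Fin (t + 1) → ℕ)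
    (hm : ∀ i, 1 ≤ m i) :
    (∀ n : ℕ, 2 ^ n < k * m 0 + ∑ i : Fin t, (m i.succ - 1) →
      ∃ c : (Fin k → Finset (Fin n)) → Fin (t + 1),
        ∀ i, ¬ HasMatchingCopy (m i) c i) ∧
    (∀ c : (Fin k → Finset (Fin (Nat.clog 2 (1 + ∑ i, (m i - 1)) + k - 1))) → Fin (t + 1),
        ∃ i, HasMatchingCopy (m i) c i) := by
  obtain ⟨k, rfl⟩ : ∃ k', k = k' + 1 := ⟨k - 1, by omega⟩
  constructor
  · intro n hn
    let a : Fin (t + 1) → ℕ := Fin.cons ((k + 1) * m 0 - 1) fun i => m i.succ - 1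
    have hm0 : 1 ≤ (k + 1) * m 0 := Nat.one_le_iff_ne_zero.2 (by have := hm 0; positivity)
    obtain ⟨χ, hlow, hfib⟩ := exists_coloring_isLowerSet_card_fiber_le (α := Finset (Fin n)) a
      (by simp only [Fintype.card_finset, Fintype.card_fin, Fin.sum_univ_succ, a, Fin.cons_zero,
        Fin.cons_succ]; omega)
    refine ⟨fun A => χ (A (Fin.last k)), fun i hc => ?_⟩
    induction i using Fin.cases with
    | zero =>
      have := (hc.mul_le_card_fiber_top hlow).trans (hfib 0)
      simp only [a, Fin.cons_zero] at this
      omega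
    | succ i =>
      have := hc.le_card_fiber_top.trans (hfib i.succ)
      simp only [a, Fin.cons_succ] at this
      have := hm i.succ
      omega
  · intro c
    let n₀ := Nat.clog 2 (1 + ∑ i, (m i - 1))
    obtain ⟨D, hD, hDinj⟩ := exists_disjoint_chains n₀ k
    obtain ⟨i, hi⟩ := exists_le_card_fiber_of_sum_pred_lt (fun S => c (D S)) m (by
      have : 1 + ∑ i, (m i - 1) ≤ 2 ^ n₀ := Nat.le_pow_clog one_lt_two _
      rw [Fintype.card_finset, Fintype.card_fin]
      omega)
    exact ⟨i, .of_le_card_fiber c hD hDinj hi⟩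

/-- for `k ≥ 2` and `m 0 ≥ m 1 ≥ … ≥ m t ≥ 1` (a `(t+1)`-tuple):
(i) if `2^n < k·(m 0) + ∑_{i=1}^{t} (m i − 1)` then some `(t+1)`-coloring of the
`k`-chains of `B_n` has no copy of the `k`-uniform matching of size `m i` in color
`i` for any `i`; and
(ii) for `N = ⌈log₂(1 + ∑ i (m i − 1))⌉ + k − 1`, every `(t+1)`-coloring of the
`k`-chains of `B_N` contains a copy of the `k`-uniform matching of size `m i` in
color `i` for some `i`. -/
theorem boolean_ramsey_matchings
    (k t : ℕ) (hk : 2 ≤ k)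
    (m : Fin (t + 1) → ℕ)
    (hmono : ∀ i j : Fin (t + 1), i ≤ j → m j ≤ m i)
    (hm : ∀ i, 1 ≤ m i) :
    (∀ n : ℕ, 2 ^ n < k * m 0 + ∑ i : Fin t, (m i.succ - 1) →
      ∃ c : (Fin k → Finset (Fin n)) → Fin (t + 1),
        ∀ i, ¬ HasMatchingCopy (m i) c i) ∧
    (∀ c : (Fin k → Finset (Fin (Nat.clog 2 (1 + ∑ i, (m i - 1)) + k - 1))) → Fin (t + 1),
        ∃ i, HasMatchingCopy (m i) c i) :=
  boolean_ramsey_matchings_general k t hk m hm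
end

section
/- For positive integers r_1, …, r_t, the least integer N such that every t-coloring of the 2-chains of the Boolean lattice B_N contains an r_i-cup in color i for some i ∈ {1,…,t} equals ⌈log_2(2 + ∑_{i=1}^t (r_i − 1))⌉; moreover the same value ⌈log_2(2 + ∑_{i=1}^t (r_i − 1))⌉ is the least integer N such that every t-coloring of the 2-chains of B_N contains an r_i-cap in color i for some i. (That is, BR^2(∨_{r_1},…,∨_{r_t}) = BR^2(∧_{r_1},…,∧_{r_t}) = ⌈log_2(2 + ∑_{i=1}^t (r_i − 1))⌉.) -/
/-- An `r`-cup in color `i` for a coloring `c` of the 2-chains of a poset `Q`: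
distinct elements `X, Y 1, …, Y r` with `X < Y k` and `c X (Y k) = i` for all `k`. -/
def IsCup {Q : Type*} [Preorder Q] {κ : Type*} (c : Q → Q → κ) (i : κ) (r : ℕ) : Prop :=
  ∃ (X : Q) (Y : Fin r → Q),
    Function.Injective Y ∧ ∀ k, X < Y k ∧ c X (Y k) = i

/-- An `s`-cap in color `i` for a coloring `c` of the 2-chains of a poset `Q`:
distinct elements `Y, X 1, …, X s` with `X k < Y` and `c (X k) Y = i` for all `k`. -/
def IsCap {Q : Type*} [Preorder Q] {κ : Type*} (c : Q → Q → κ) (i : κ) (s : ℕ) : Prop :=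
  ∃ (Y : Q) (X : Fin s → Q),
    Function.Injective X ∧ ∀ k, X k < Y ∧ c (X k) Y = i

/-!
In a finite poset with a least element `⊥` there are `|Q| - 1` chains `(⊥, Y)`, so once
`|Q| - 1 > ∑ (r i - 1)` pigeonhole on their colours gives an `r i`-cup in some colour `i`.
Conversely, if `|Q| - 1 ≤ ∑ (r i - 1)`, fix a minimal element `m`, colour the other elements so
that colour `i` is used at most `r i - 1` times, and give each chain `(X, Y)` the colour of its
top `Y`: the tops of a cup are distinct and differ from `m`. Caps are cups in the order dual,
and `|B_N| = 2 ^ N`.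
-/

open Finset

theorem Finset.exists_lt_card_fiber_of_sum_lt_card {α κ : Type*} [Fintype κ] [DecidableEq κ]
    (s : Finset α) (f : α → κ) (b : κ → ℕ) (h : ∑ i, b i < #s) :
    ∃ i, b i < #{x ∈ s | f x = i} := by
  rw [card_eq_sum_card_fiberwise fun x _ => mem_univ (f x)] at h
  simpa using exists_lt_of_sum_lt h

variable {Q κ : Type*}

theorem isCup_of_le_card [Preorder Q] {c : Q → Q → κ} {i : κ} {r : ℕ} (X : Q) (s : Finset Q)
    (hs : ∀ y ∈ s, X < y ∧ c X y = i) (hr : r ≤ #s) : IsCup c i r := by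
  obtain ⟨e⟩ := Function.Embedding.nonempty_of_card_le (α := Fin r) (β := s) (by simpa using hr)
  exact ⟨X, fun k => e k, Subtype.val_injective.comp e.injective, fun k => hs _ (e k).2⟩

theorem isCap_iff_isCup_toDual [Preorder Q] (c : Q → Q → κ) (i : κ) (s : ℕ) :
    IsCap c i s ↔ IsCup (fun a b : Qᵒᵈ => c (OrderDual.ofDual b) (OrderDual.ofDual a)) i s :=
  Iff.rfl

section Threshold

variable [Fintype Q] [PartialOrder Q] [Fintype κ] (r : κ → ℕ)

theorem exists_isCup [OrderBot Q] (c : Q → Q → κ)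
    (h : 2 + ∑ i, (r i - 1) ≤ Fintype.card Q) : ∃ i, IsCup c i (r i) := by
  classical
  have hs : ∑ i, (r i - 1) < #(univ.erase (⊥ : Q)) := by
    rw [card_erase_of_mem (mem_univ _), card_univ]
    omega
  obtain ⟨i, hi⟩ := exists_lt_card_fiber_of_sum_lt_card _ (c ⊥) (fun i => r i - 1) hs
  refine ⟨i, isCup_of_le_card ⊥ {y ∈ univ.erase ⊥ | c ⊥ y = i} (fun y hy => ?_) (by omega)⟩
  simp only [mem_filter, mem_erase, mem_univ, and_true] at hy
  exact ⟨bot_lt_iff_ne_bot.2 hy.1, hy.2⟩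

theorem exists_coloring_not_isCup [Nonempty Q] [Nonempty κ] (hr : ∀ i, 1 ≤ r i)
    (h : Fintype.card Q ≤ 1 + ∑ i, (r i - 1)) :
    ∃ c : Q → Q → κ, ∀ i, ¬IsCup c i (r i) := by
  classical
  obtain ⟨m, hm⟩ :=
    exists_minimal_of_wellFoundedLT (fun _ : Q => True) ⟨Classical.arbitrary Q, trivial⟩
  rw [minimal_true] at hm
  have hcard : Fintype.card {y // y ≠ m} ≤ Fintype.card (Σ i, Fin (r i - 1)) := by
    simp only [Fintype.card_subtype_compl, Fintype.card_unique, Fintype.card_sigma,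
      Fintype.card_fin]
    omega
  obtain ⟨e⟩ := Function.Embedding.nonempty_of_card_le hcard
  let c : Q → Q → κ := fun _ y => if hy : y = m then Classical.arbitrary κ else (e ⟨y, hy⟩).1
  refine ⟨c, fun i ⟨X, Y, hY, hXY⟩ => ?_⟩
  have hYm (k : Fin (r i)) : Y k ≠ m := fun h => hm.not_lt (h ▸ (hXY k).1)
  let F (k : Fin (r i)) : {p : Σ j, Fin (r j - 1) // p.1 = i} :=
    ⟨e ⟨Y k, hYm k⟩, by simpa [c, hYm k] using (hXY k).2⟩
  have hF : Function.Injective F := fun a b hab =>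
    hY (congrArg Subtype.val (e.injective (congrArg Subtype.val hab)))
  have hFcard := Fintype.card_le_of_injective F hF
  rw [Fintype.card_congr (Equiv.sigmaSubtype i), Fintype.card_fin, Fintype.card_fin] at hFcard
  have hri := hr i
  omega

theorem exists_isCap [OrderTop Q] (c : Q → Q → κ)
    (h : 2 + ∑ i, (r i - 1) ≤ Fintype.card Q) : ∃ i, IsCap c i (r i) := by
  simp only [isCap_iff_isCup_toDual]
  exact exists_isCup r _ (by rwa [Fintype.card_orderDual])

theorem exists_coloring_not_isCap [Nonempty Q] [Nonempty κ] (hr : ∀ i, 1 ≤ r i)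
    (h : Fintype.card Q ≤ 1 + ∑ i, (r i - 1)) :
    ∃ c : Q → Q → κ, ∀ i, ¬IsCap c i (r i) := by
  obtain ⟨c, hc⟩ := exists_coloring_not_isCup (Q := Qᵒᵈ) r hr (by rwa [Fintype.card_orderDual])
  exact ⟨fun a b => c (OrderDual.toDual b) (OrderDual.toDual a), hc⟩

variable [Nonempty κ] {r}

theorem forall_exists_isCup_iff [OrderBot Q] (hr : ∀ i, 1 ≤ r i) :
    (∀ c : Q → Q → κ, ∃ i, IsCup c i (r i)) ↔ 2 + ∑ i, (r i - 1) ≤ Fintype.card Q := by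
  refine ⟨fun h => ?_, fun h c => exists_isCup r c h⟩
  by_contra! hlt
  obtain ⟨c, hc⟩ := exists_coloring_not_isCup (Q := Q) r hr (by omega)
  obtain ⟨i, hi⟩ := h c
  exact hc i hi

theorem forall_exists_isCap_iff [OrderTop Q] (hr : ∀ i, 1 ≤ r i) :
    (∀ c : Q → Q → κ, ∃ i, IsCap c i (r i)) ↔ 2 + ∑ i, (r i - 1) ≤ Fintype.card Q := by
  refine ⟨fun h => ?_, fun h c => exists_isCap r c h⟩
  by_contra! hlt
  obtain ⟨c, hc⟩ := exists_coloring_not_isCap (Q := Q) r hr (by omega)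
  obtain ⟨i, hi⟩ := h c
  exact hc i hi

end Threshold

theorem Nat.isLeast_clog_two_of_iff_le_pow {P : ℕ → Prop} {a : ℕ} (h : ∀ N, P N ↔ a ≤ 2 ^ N) :
    IsLeast {N | P N} (Nat.clog 2 a) := by
  have hP : {N | P N} = Set.Ici (Nat.clog 2 a) := by
    ext N
    simp [h, Nat.clog_le_iff_le_pow]
  exact hP ▸ isLeast_Ici

/-- `BR^2(∨_{r 0},…,∨_{r (t-1)}) = BR^2(∧_{r 0},…,∧_{r (t-1)})
= ⌈log₂(2 + ∑ i (r i − 1))⌉`: this value is the least `N` such that every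
`t`-coloring of the 2-chains of the Boolean lattice `B_N` contains an `r i`-cup in
color `i` for some `i`, and also the least `N` for which the same holds with caps. -/
theorem boolean_ramsey_cups_and_caps
    (t : ℕ) (ht : 1 ≤ t) (r : Fin t → ℕ) (hr : ∀ i, 1 ≤ r i) :
    IsLeast
      {N : ℕ | ∀ c : Finset (Fin N) → Finset (Fin N) → Fin t,
        ∃ i, IsCup c i (r i)}
      (Nat.clog 2 (2 + ∑ i, (r i - 1))) ∧
    IsLeast
      {N : ℕ | ∀ c : Finset (Fin N) → Finset (Fin N) → Fin t,
        ∃ i, IsCap c i (r i)}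
      (Nat.clog 2 (2 + ∑ i, (r i - 1))) := by
  have : Nonempty (Fin t) := ⟨⟨0, ht⟩⟩
  refine ⟨Nat.isLeast_clog_two_of_iff_le_pow fun N => ?_,
    Nat.isLeast_clog_two_of_iff_le_pow fun N => ?_⟩
  · rw [forall_exists_isCup_iff hr, Fintype.card_finset, Fintype.card_fin]
  · rw [forall_exists_isCap_iff hr, Fintype.card_finset, Fintype.card_fin]
end

section
/- Let r, s ≥ 2 be integers. Then: (i) for N = ⌈log_{3/2}(r + s − 1)⌉, every 2-coloring of the 2-chains of the Boolean lattice B_N contains an r-cup in color 1 or an s-cap in color 2; and (ii) for every integer n with 2^n < ⌊(√(1 + 8(r−1)(s−1)) − 1)/2⌋ + r + s, there exists a 2-coloring of the 2-chains of B_n containing no r-cup in color 1 and no s-cap in color 2. (That is, log_2(⌊(√(1+8(r−1)(s−1))−1)/2⌋ + r + s) ≤ BR^2(∨_r, ∧_s) ≤ ⌈log_{3/2}(r + s − 1)⌉.) -/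
open Finset

theorem le_card_iff_exists_injective_mem {α : Type*} (s : Finset α) (r : ℕ) :
    r ≤ #s ↔ ∃ Y : Fin r → α, Function.Injective Y ∧ ∀ k, Y k ∈ s := by
  rw [show r ≤ #s ↔ Nonempty (Fin r ↪ s) by simp [Function.Embedding.nonempty_iff_card_le]]
  constructor
  · rintro ⟨e⟩
    exact ⟨(↑) ∘ e, Subtype.val_injective.comp e.injective, fun k => (e k).2⟩
  · rintro ⟨Y, hY, hmem⟩
    exact ⟨⟨fun k => ⟨Y k, hmem k⟩, fun _ _ h => hY (congrArg Subtype.val h)⟩⟩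

section Degree

variable {Q κ : Type*} [Preorder Q] [Fintype Q] [DecidableRel (α := Q) (· < ·)] [DecidableEq κ]

theorem isCup_iff_exists_le_card (c : Q → Q → κ) (i : κ) (r : ℕ) :
    IsCup c i r ↔ ∃ X, r ≤ #{Y | X < Y ∧ c X Y = i} := by
  simp [IsCup, le_card_iff_exists_injective_mem]

theorem isCap_iff_exists_le_card (c : Q → Q → κ) (i : κ) (s : ℕ) :
    IsCap c i s ↔ ∃ Y, s ≤ #{X | X < Y ∧ c X Y = i} := by
  simp [IsCap, le_card_iff_exists_injective_mem]

end Degree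

section Comp

variable {P Q κ : Type*} [Preorder P] [Preorder Q] {f : P → Q}

theorem IsCup.of_comp (hf : StrictMono f) (hinj : Function.Injective f) {c : Q → Q → κ}
    {i : κ} {r : ℕ} (h : IsCup (fun x y => c (f x) (f y)) i r) : IsCup c i r := by
  obtain ⟨X, Y, hY, hXY⟩ := h
  exact ⟨f X, f ∘ Y, hinj.comp hY, fun k => ⟨hf (hXY k).1, (hXY k).2⟩⟩

theorem IsCap.of_comp (hf : StrictMono f) (hinj : Function.Injective f) {c : Q → Q → κ}
    {i : κ} {s : ℕ} (h : IsCap (fun x y => c (f x) (f y)) i s) : IsCap c i s := by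
  obtain ⟨Y, X, hX, hXY⟩ := h
  exact ⟨f Y, f ∘ X, hinj.comp hX, fun k => ⟨hf (hXY k).1, (hXY k).2⟩⟩

end Comp

theorem sum_card_lt_le_of_not_isCup_of_not_isCap {Q : Type*} [Preorder Q] [Fintype Q]
    [DecidableRel (α := Q) (· < ·)] {c : Q → Q → Fin 2} {a b : ℕ}
    (hcup : ¬IsCup c 0 (a + 1)) (hcap : ¬IsCap c 1 (b + 1)) :
    ∑ Y : Q, #{X | X < Y} ≤ Fintype.card Q * (a + b) := by
  simp only [isCup_iff_exists_le_card, isCap_iff_exists_le_card, not_exists, not_le,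
    Nat.lt_succ_iff] at hcup hcap
  have hsplit : ∀ Y : Q,
      #{X | X < Y} = #{X | X < Y ∧ c X Y = 0} + #{X | X < Y ∧ c X Y = 1} := by
    intro Y
    rw [← card_filter_add_card_filter_not (fun X => c X Y = 0), filter_filter, filter_filter]
    congr 2
    ext X
    simp only [mem_filter, mem_univ, true_and]
    generalize c X Y = z
    fin_cases z <;> simp
  calc ∑ Y : Q, #{X | X < Y}
      = ∑ X, #{Y | X < Y ∧ c X Y = 0} + ∑ Y, #{X | X < Y ∧ c X Y = 1} := by
        simp only [hsplit, sum_add_distrib, card_filter]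
        rw [sum_comm]
    _ ≤ ∑ _X : Q, a + ∑ _Y : Q, b :=
        add_le_add (sum_le_sum fun X _ => hcup X) (sum_le_sum fun Y _ => hcap Y)
    _ = Fintype.card Q * (a + b) := by simp [mul_add]

theorem sum_card_Iio_finset_add_two_pow (α : Type*) [Fintype α] [DecidableEq α] :
    ∑ B : Finset α, #(Iio B) + 2 ^ Fintype.card α = 3 ^ Fintype.card α := by
  have h := sum_pow_mul_eq_add_pow (2 : ℕ) 1 (univ : Finset α)
  simp only [one_pow, mul_one, powerset_univ, card_univ] at h
  rw [← h, ← Fintype.card_finset, ← card_univ, card_eq_sum_ones, ← sum_add_distrib]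
  refine sum_congr rfl fun B _ => ?_
  rw [card_Iio_finset]
  exact Nat.sub_add_cancel Nat.one_le_two_pow

theorem isCup_or_isCap_of_mul_two_pow_lt_three_pow {α : Type*} [Fintype α] [DecidableEq α]
    {a b : ℕ} (h : (a + b + 1) * 2 ^ Fintype.card α < 3 ^ Fintype.card α)
    (c : Finset α → Finset α → Fin 2) : IsCup c 0 (a + 1) ∨ IsCap c 1 (b + 1) := by
  by_contra! hc
  have hle := sum_card_lt_le_of_not_isCup_of_not_isCap hc.1 hc.2
  simp only [filter_gt_eq_Iio, Fintype.card_finset] at hle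
  have := sum_card_Iio_finset_add_two_pow α
  nlinarith

theorem mul_two_pow_lt_three_pow_of_eq_ceil_logb {x N : ℕ} (hx : 1 < x)
    (hN : (N : ℤ) = ⌈Real.logb (3 / 2) x⌉) : x * 2 ^ N < 3 ^ N := by
  have hx' : (1 : ℝ) < x := by exact_mod_cast hx
  have hN0 : N ≠ 0 := by
    have := Int.ceil_pos.mpr (Real.logb_pos (by norm_num : (1 : ℝ) < 3 / 2) hx')
    omega
  have hle : x * 2 ^ N ≤ 3 ^ N := by
    have hlogb : Real.logb (3 / 2) x ≤ N := by exact_mod_cast Int.ceil_le.mp hN.ge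
    rw [Real.logb_le_iff_le_rpow (by norm_num) (by positivity), Real.rpow_natCast] at hlogb
    have : (x : ℝ) * 2 ^ N ≤ 3 ^ N := by
      calc (x : ℝ) * 2 ^ N ≤ (3 / 2) ^ N * 2 ^ N := by gcongr
        _ = 3 ^ N := by rw [← mul_pow]; norm_num
    exact_mod_cast this
  -- `3 ^ N` is odd while `x * 2 ^ N` is even.
  refine hle.lt_of_ne fun heq => Nat.not_even_iff_odd.mpr (Odd.pow (n := N) (by decide : Odd 3)) ?_
  exact heq ▸ (Nat.even_pow.mpr ⟨even_two, hN0⟩).mul_left x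

theorem exists_injective_slot_of_hall {P : Type*} [Preorder P] [DecidableEq P] (a b : ℕ)
    (hall : ∀ S : Finset (P × P), (∀ p ∈ S, p.1 < p.2) →
      #S ≤ a * #(S.image Prod.fst) + b * #(S.image Prod.snd)) :
    ∃ f : {p : P × P // p.1 < p.2} → (P × Fin a) ⊕ (P × Fin b), Function.Injective f ∧
      ∀ e, (∃ i, f e = .inl (e.1.1, i)) ∨ ∃ j, f e = .inr (e.1.2, j) := by
  let t : {p : P × P // p.1 < p.2} → Finset ((P × Fin a) ⊕ (P × Fin b)) := fun e =>
    ({e.1.1} ×ˢ univ).disjSum ({e.1.2} ×ˢ univ)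
  obtain ⟨f, hf, hft⟩ := (all_card_le_biUnion_card_iff_exists_injective t).mp fun s => by
    have hunion : s.biUnion t =
        ((s.image fun e => e.1.1) ×ˢ univ).disjSum ((s.image fun e => e.1.2) ×ˢ univ) := by
      ext (⟨u, i⟩ | ⟨v, j⟩) <;> simp [t]
    have := hall (s.map (Function.Embedding.subtype _)) (by simp +contextual)
    rw [card_map] at this
    rw [hunion, card_disjSum, card_product, card_product]
    simpa [map_eq_image, image_image, Function.comp_def, mul_comm] using this
  refine ⟨f, hf, fun e => ?_⟩
  have := hft e
  rcases hz : f e with ⟨u, i⟩ | ⟨v, j⟩ <;> simp_all [t]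

theorem exists_not_isCup_and_not_isCap_of_hall {P : Type*} [Preorder P] [DecidableEq P] (a b : ℕ)
    (hall : ∀ S : Finset (P × P), (∀ p ∈ S, p.1 < p.2) →
      #S ≤ a * #(S.image Prod.fst) + b * #(S.image Prod.snd)) :
    ∃ c : P → P → Fin 2, ¬IsCup c 0 (a + 1) ∧ ¬IsCap c 1 (b + 1) := by
  classical
  -- `f` matches every strict pair `(X, Y)` to one of `a` slots of `X` or one of `b` slots of `Y`.
  obtain ⟨f, hf, hslot⟩ := exists_injective_slot_of_hall a b hall
  refine ⟨fun X Y => if h : X < Y then (if (f ⟨(X, Y), h⟩).isLeft then 0 else 1) else 0,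
    ?_, ?_⟩
  · rintro ⟨X, Y, hY, hXY⟩
    have := card_le_card_of_injOn (s := univ)
      (t := (univ : Finset (Fin a)).map ⟨fun i => .inl (X, i), fun i j h => by simpa using h⟩)
      (fun k => f ⟨(X, Y k), (hXY k).1⟩) (fun k _ => ?_) (fun k _ l _ hkl => ?_)
    · simp at this
    · have h0 := (hXY k).2
      simp only [dif_pos (hXY k).1] at h0
      obtain ⟨i, hi⟩ | ⟨j, hj⟩ := hslot ⟨(X, Y k), (hXY k).1⟩
      · exact mem_map.2 ⟨i, mem_univ _, hi.symm⟩
      · simp [hj] at h0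
    · exact hY (by simpa using congrArg (fun e => e.1.2) (hf hkl))
  · rintro ⟨Y, X, hX, hXY⟩
    have := card_le_card_of_injOn (s := univ)
      (t := (univ : Finset (Fin b)).map ⟨fun j => .inr (Y, j), fun i j h => by simpa using h⟩)
      (fun k => f ⟨(X k, Y), (hXY k).1⟩) (fun k _ => ?_) (fun k _ l _ hkl => ?_)
    · simp at this
    · have h1 := (hXY k).2
      simp only [dif_pos (hXY k).1] at h1
      obtain ⟨i, hi⟩ | ⟨j, hj⟩ := hslot ⟨(X k, Y), (hXY k).1⟩
      · simp [hi] at h1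
      · exact mem_map.2 ⟨j, mem_univ _, hj.symm⟩
    · exact hX (by simpa using congrArg (fun e => e.1.1) (hf hkl))

theorem sum_range_min_tsub_le {a b m : ℕ} (hm : m * (m + 1) ≤ 2 * (a * b)) (k : ℕ) :
    ∑ v ∈ range (b + (m + 1) + a), (min k v - b) ≤ a * k := by
  rcases le_total k b with hk | hk
  · exact (sum_eq_zero fun v _ => by omega).trans_le (Nat.zero_le _)
  have hlow : ∑ v ∈ range b, (min k v - b) = 0 := sum_eq_zero fun v hv => by
    simp only [mem_range] at hv; omega
  have hmid : ∑ i ∈ range (m + 1), (min k (b + i) - b) ≤ a * b := by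
    have htri : (∑ i ∈ range (m + 1), i) * 2 = m * (m + 1) := by
      rw [sum_range_id_mul_two, Nat.add_sub_cancel, mul_comm]
    calc ∑ i ∈ range (m + 1), (min k (b + i) - b) ≤ ∑ i ∈ range (m + 1), i :=
          sum_le_sum fun i _ => by omega
      _ ≤ a * b := by omega
  have hhigh : ∑ i ∈ range a, (min k (b + (m + 1) + i) - b) ≤ a * (k - b) := by
    simpa using sum_le_sum fun i (_ : i ∈ range a) =>
      (by omega : min k (b + (m + 1) + i) - b ≤ k - b)
  rw [sum_range_add, sum_range_add, hlow]
  calc _ ≤ 0 + a * b + a * (k - b) := by gcongr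
    _ = a * k := by rw [zero_add, ← mul_add, Nat.add_sub_cancel' hk]

theorem card_le_of_forall_fst_lt_snd {a b m : ℕ} (hm : m * (m + 1) ≤ 2 * (a * b))
    (S : Finset (Fin (b + (m + 1) + a) × Fin (b + (m + 1) + a))) (hS : ∀ p ∈ S, p.1 < p.2) :
    #S ≤ a * #(S.image Prod.fst) + b * #(S.image Prod.snd) := by
  set K := S.image Prod.fst
  have hfiber : ∀ v, #{p ∈ S | p.2 = v} ≤ min #K v := fun v => by
    calc #{p ∈ S | p.2 = v} ≤ #{u ∈ K | u < v} :=
          card_le_card_of_injOn Prod.fst (fun p hp => by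
            obtain ⟨hpS, rfl⟩ := mem_filter.1 hp
            simpa [K] using ⟨⟨p.2, hpS⟩, hS p hpS⟩)
            (fun p hp q hq h => Prod.ext h ((mem_filter.1 hp).2.trans (mem_filter.1 hq).2.symm))
      _ ≤ min #K v := le_min (card_filter_le _ _)
          ((card_le_card fun u hu => by simpa using (mem_filter.1 hu).2).trans (Fin.card_Iio v).le)
  calc #S = ∑ v ∈ S.image Prod.snd, #{p ∈ S | p.2 = v} := card_eq_sum_card_image Prod.snd S
    _ ≤ ∑ v ∈ S.image Prod.snd, (b + (min #K v - b)) :=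
        sum_le_sum fun v _ => (hfiber v).trans le_add_tsub
    _ = b * #(S.image Prod.snd) + ∑ v ∈ S.image Prod.snd, (min #K v - b) := by
        rw [sum_add_distrib, sum_const, smul_eq_mul, mul_comm]
    _ ≤ b * #(S.image Prod.snd) + ∑ v : Fin (b + (m + 1) + a), (min #K v - b) := by
        gcongr; exact subset_univ _
    _ ≤ b * #(S.image Prod.snd) + a * #K := by
        rw [Fin.sum_univ_eq_sum_range (fun v => min #K v - b)]
        gcongr
        exact sum_range_min_tsub_le hm _
    _ = a * #K + b * #(S.image Prod.snd) := add_comm _ _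

theorem exists_strictMono_injective_fin {P : Type*} [PartialOrder P] [Fintype P] {T : ℕ}
    (h : Fintype.card P ≤ T) : ∃ f : P → Fin T, StrictMono f ∧ Function.Injective f := by
  let : Fintype (LinearExtension P) := inferInstanceAs (Fintype P)
  let g : LinearExtension P ↪o Fin T :=
    (Fintype.orderIsoFinOfCardEq (LinearExtension P) rfl).symm.toOrderEmbedding.trans
      (Fin.castLEOrderEmb h)
  refine ⟨g ∘ toLinearExtension, fun x y hxy => g.strictMono ?_, g.injective.comp fun _ _ => id⟩
  exact (toLinearExtension.monotone hxy.le).lt_of_ne hxy.ne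

theorem exists_not_isCup_and_not_isCap {P : Type*} [PartialOrder P] [Fintype P] {a b m : ℕ}
    (hm : m * (m + 1) ≤ 2 * (a * b)) (hP : Fintype.card P ≤ b + (m + 1) + a) :
    ∃ c : P → P → Fin 2, ¬IsCup c 0 (a + 1) ∧ ¬IsCap c 1 (b + 1) := by
  obtain ⟨χ, hcup, hcap⟩ :=
    exists_not_isCup_and_not_isCap_of_hall a b (card_le_of_forall_fst_lt_snd hm)
  obtain ⟨f, hf, hinj⟩ := exists_strictMono_injective_fin hP
  exact ⟨fun x y => χ (f x) (f y), fun h => hcup (h.of_comp hf hinj),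
    fun h => hcap (h.of_comp hf hinj)⟩

theorem exists_eq_floor_and_mul_succ_le (a b : ℕ) :
    ∃ m : ℕ, (m : ℤ) = ⌊(√(1 + 8 * a * b) - 1) / 2⌋ ∧ m * (m + 1) ≤ 2 * (a * b) := by
  have hsqrt : (1 : ℝ) ≤ √(1 + 8 * a * b) :=
    Real.one_le_sqrt.2 (le_add_of_nonneg_right (by positivity))
  obtain ⟨m, hm⟩ := Int.eq_ofNat_of_zero_le
    (Int.floor_nonneg.mpr (by linarith : (0 : ℝ) ≤ (√(1 + 8 * a * b) - 1) / 2))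
  refine ⟨m, hm.symm, ?_⟩
  have hmle : (m : ℝ) ≤ (√(1 + 8 * a * b) - 1) / 2 := by exact_mod_cast hm ▸ Int.floor_le _
  have hsq : ((2 * m + 1) ^ 2 : ℝ) ≤ 1 + 8 * a * b :=
    calc ((2 * m + 1) ^ 2 : ℝ) ≤ √(1 + 8 * a * b) ^ 2 := by gcongr; linarith
      _ = 1 + 8 * a * b := Real.sq_sqrt (by positivity)
  have : (2 * m + 1) ^ 2 ≤ 1 + 8 * a * b := by exact_mod_cast hsq
  nlinarith

/-- for `r, s ≥ 2`:
(i) for `N = ⌈log_{3/2}(r + s − 1)⌉`, every 2-coloring of the 2-chains of the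
Boolean lattice `B_N` contains an `r`-cup in color `0` or an `s`-cap in color `1`;
(ii) for every `n` with `2^n < ⌊(√(1 + 8(r−1)(s−1)) − 1)/2⌋ + r + s`, some
2-coloring of the 2-chains of `B_n` has no `r`-cup in color `0` and no `s`-cap in
color `1`.
(That is, `log₂(⌊(√(1+8(r−1)(s−1))−1)/2⌋ + r + s) ≤ BR^2(∨_r, ∧_s)
≤ ⌈log_{3/2}(r + s − 1)⌉`.) -/
theorem boolean_ramsey_cup_vs_cap
    (r s : ℕ) (hr : 2 ≤ r) (hs : 2 ≤ s) :
    (∀ N : ℕ, (N : ℤ) = ⌈Real.logb (3 / 2) ((r : ℝ) + (s : ℝ) - 1)⌉ →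
      ∀ c : Finset (Fin N) → Finset (Fin N) → Fin 2,
        IsCup c 0 r ∨ IsCap c 1 s) ∧
    (∀ n : ℕ,
      (2 : ℤ) ^ n <
        ⌊(Real.sqrt (1 + 8 * ((r : ℝ) - 1) * ((s : ℝ) - 1)) - 1) / 2⌋ + r + s →
      ∃ c : Finset (Fin n) → Finset (Fin n) → Fin 2,
        ¬ IsCup c 0 r ∧ ¬ IsCap c 1 s) := by
  obtain ⟨a, rfl⟩ : ∃ a, r = a + 1 := ⟨r - 1, by omega⟩
  obtain ⟨b, rfl⟩ : ∃ b, s = b + 1 := ⟨s - 1, by omega⟩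
  refine ⟨fun N hN c => ?_, fun n hn => ?_⟩
  · have hx : ((a + 1 : ℕ) : ℝ) + ((b + 1 : ℕ) : ℝ) - 1 = ((a + b + 1 : ℕ) : ℝ) := by
      push_cast; ring
    rw [hx] at hN
    refine isCup_or_isCap_of_mul_two_pow_lt_three_pow ?_ c
    simpa using mul_two_pow_lt_three_pow_of_eq_ceil_logb (by omega) hN
  · have hX : 1 + 8 * (((a + 1 : ℕ) : ℝ) - 1) * (((b + 1 : ℕ) : ℝ) - 1) = 1 + 8 * a * b := by
      push_cast; ring
    rw [hX] at hn
    obtain ⟨m, hm, hmab⟩ := exists_eq_floor_and_mul_succ_le a b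
    refine exists_not_isCup_and_not_isCap hmab ?_
    rw [← hm] at hn
    have : ((2 ^ n : ℕ) : ℤ) < ((m + (a + 1) + (b + 1) : ℕ) : ℤ) := by exact_mod_cast hn
    rw [Fintype.card_finset, Fintype.card_fin]
    omega
end

section
/- For integers r, s ≥ 2 and N = 2·⌊(√(1 + 8(r−1)(s−1)) − 1)/2⌋ + 3(r + s) − 1, every 2-coloring of the 2-chains of the chain C_N contains an r-diamond in color 1 or an s-diamond in color 2. (That is, CR^2(⋄_r, ⋄_s) ≤ 2⌊(√(1+8(r−1)(s−1))−1)/2⌋ + 3(r+s) − 1.) -/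
/-!
Fix the ends `x < z` and sort every `y` strictly between them by the colors of `(x, y)` and
`(y, z)`. A monochromatic class of color `i` is the middle of a diamond in color `i`, so it is
smaller than `r` (resp. `s`). In a mixed class `T` of colors `(0, 1)`, no element of `T` has `r`
smaller elements of `T` joined to it in color `0`, or `s` larger ones joined to it in color `1`
(these would complete a diamond with `x`, resp. `z`). Counting the pairs of `T` by their upper
end when colored `0` and by their lower end otherwise gives
`t (t - 1) / 2 ≤ ∑_{k<t} (min (r-1) k + min (s-1) k)` for `t = #T`, which solves to
`t ≤ r + s - 1 + ⌊(√(1 + 8(r-1)(s-1)) - 1) / 2⌋`. The four classes together then have fewer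
than `N - 2` elements.
-/

/-- An `r`-diamond in color `i` for a coloring `c` of the 2-chains of a poset `Q`:
distinct elements `x, y 1, …, y r, z` with `x < y k < z`, `c x (y k) = i` and
`c (y k) z = i` for all `k` (the pair `(x, z)` may have any color). -/
def IsDiamond {Q : Type*} [Preorder Q] {κ : Type*} (c : Q → Q → κ) (i : κ) (r : ℕ) : Prop :=
  ∃ (x z : Q) (y : Fin r → Q),
    Function.Injective y ∧
    ∀ k, x < y k ∧ y k < z ∧ c x (y k) = i ∧ c (y k) z = i

open Finset

theorem sum_comp_card_filter_lt {α M : Type*} [LinearOrder α] [AddCommMonoid M]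
    (T : Finset α) (g : ℕ → M) :
    ∑ z ∈ T, g #{y ∈ T | y < z} = ∑ k ∈ range #T, g k := by
  induction T using Finset.induction_on_max with
  | empty => simp
  | insert a T ha ih =>
    have haT : a ∉ T := fun h => (ha a h).false
    rw [sum_insert haT, card_insert_of_notMem haT, sum_range_succ, add_comm]
    congr 1
    · rw [← ih]
      refine sum_congr rfl fun z hz => ?_
      rw [filter_insert, if_neg (ha z hz).asymm]
    · rw [filter_insert, if_neg (lt_irrefl a), filter_true_of_mem ha]

theorem sum_comp_card_filter_gt {α M : Type*} [LinearOrder α] [AddCommMonoid M]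
    (T : Finset α) (g : ℕ → M) :
    ∑ z ∈ T, g #{y ∈ T | z < y} = ∑ k ∈ range #T, g k :=
  sum_comp_card_filter_lt (α := αᵒᵈ) T g

theorem sum_range_card_le_sum_min_add_sum_min {α : Type*} [LinearOrder α] (T : Finset α)
    (P : α → α → Prop) [DecidableRel P] {A B : ℕ}
    (hA : ∀ z ∈ T, #{y ∈ T | y < z ∧ P y z} ≤ A)
    (hB : ∀ x ∈ T, #{y ∈ T | x < y ∧ ¬ P x y} ≤ B) :
    ∑ k ∈ range #T, k ≤ ∑ k ∈ range #T, min A k + ∑ k ∈ range #T, min B k := by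
  have hswap : ∑ z ∈ T, #{y ∈ T | y < z ∧ ¬ P y z} = ∑ x ∈ T, #{y ∈ T | x < y ∧ ¬ P x y} := by
    simp only [card_filter]
    exact sum_comm
  calc ∑ k ∈ range #T, k = ∑ z ∈ T, #{y ∈ T | y < z} := (sum_comp_card_filter_lt T id).symm
    _ = ∑ z ∈ T, #{y ∈ T | y < z ∧ P y z} + ∑ z ∈ T, #{y ∈ T | y < z ∧ ¬ P y z} := by
      rw [← sum_add_distrib]
      refine sum_congr rfl fun z _ => ?_
      rw [← filter_filter, ← filter_filter, card_filter_add_card_filter_not]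
    _ ≤ ∑ z ∈ T, min A #{y ∈ T | y < z} + ∑ x ∈ T, min B #{y ∈ T | x < y} := by
      rw [hswap]
      gcongr with z hz x hx
      · exact le_min (hA z hz) (card_le_card (monotone_filter_right _ fun _ _ h => h.1))
      · exact le_min (hB x hx) (card_le_card (monotone_filter_right _ fun _ _ h => h.1))
    _ = _ := by rw [sum_comp_card_filter_lt, sum_comp_card_filter_gt]

theorem sum_range_min_mul_two (A : ℕ) {t : ℕ} (ht : A ≤ t) :
    (∑ k ∈ range t, min A k) * 2 + A * A + A = 2 * A * t := by
  induction t, ht using Nat.le_induction with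
  | base =>
    rw [sum_congr rfl fun k hk => min_eq_right (mem_range.1 hk).le, sum_range_id_mul_two]
    cases A <;> simp; ring
  | succ t ht ih =>
    rw [sum_range_succ, min_eq_left ht]
    linarith

theorem le_floor_sqrt_sub_one_div_two {m : ℤ} {x : ℝ} (h : (2 * m + 1) ^ 2 ≤ x) :
    m ≤ ⌊(√x - 1) / 2⌋ := by
  rw [Int.le_floor, le_div_iff₀ two_pos, le_sub_iff_add_le, mul_comm]
  exact (le_abs_self _).trans (Real.abs_le_sqrt h)

theorem floor_sqrt_one_add_nonneg (A B : ℕ) : 0 ≤ ⌊(√(1 + 8 * A * B) - 1) / 2⌋ :=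
  le_floor_sqrt_sub_one_div_two (by norm_num; positivity)

theorem le_of_sum_range_le_sum_min_add_sum_min {t A B : ℕ}
    (h : ∑ k ∈ range t, k ≤ ∑ k ∈ range t, min A k + ∑ k ∈ range t, min B k) :
    (t : ℤ) ≤ A + B + 1 + ⌊(√(1 + 8 * A * B) - 1) / 2⌋ := by
  rcases le_or_gt t (A + B + 1) with hsmall | hlarge
  · have := floor_sqrt_one_add_nonneg A B
    omega
  have hpairs : t * (t - 1) + (A * A + A) + (B * B + B) ≤ 2 * A * t + 2 * B * t := by
    rw [← sum_range_id_mul_two, ← sum_range_min_mul_two A (by omega),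
      ← sum_range_min_mul_two B (by omega)]
    linarith
  -- completing the square in `t`
  have hsq : (2 * ((t : ℤ) - A - B - 1) + 1) ^ 2 ≤ 1 + 8 * A * B := by
    zify [show 1 ≤ t by omega] at hpairs
    linarith
  have := le_floor_sqrt_sub_one_div_two (x := 1 + 8 * A * B) (m := t - A - B - 1)
    (by exact_mod_cast hsq)
  linarith

theorem card_lt_of_not_isDiamond {Q κ : Type*} [Preorder Q] {c : Q → Q → κ} {i : κ} {r : ℕ}
    (hc : ¬ IsDiamond c i r) {x z : Q} {S : Finset Q}
    (hS : ∀ y ∈ S, x < y ∧ y < z ∧ c x y = i ∧ c y z = i) : #S < r := by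
  by_contra! hr
  obtain ⟨S', hS'S, hS'⟩ := exists_subset_card_eq hr
  let y : Fin r ≃ S' := (S'.equivFinOfCardEq hS').symm
  exact hc ⟨x, z, fun k => y k, Subtype.val_injective.comp y.injective,
    fun k => hS _ (hS'S (y k).2)⟩

section ColorClass

variable {Q κ : Type*} [LinearOrder Q] [LocallyFiniteOrder Q] [DecidableEq κ]

def colorClass (c : Q → Q → κ) (x z : Q) (i j : κ) : Finset Q :=
  {y ∈ Ioo x z | (c x y, c y z) = (i, j)}

@[simp]
theorem mem_colorClass {c : Q → Q → κ} {x z : Q} {i j : κ} {y : Q} :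
    y ∈ colorClass c x z i j ↔ (x < y ∧ y < z) ∧ c x y = i ∧ c y z = j := by
  simp [colorClass]

theorem card_Ioo_eq_sum_card_colorClass [Fintype κ] (c : Q → Q → κ) (x z : Q) :
    #(Ioo x z) = ∑ p : κ × κ, #(colorClass c x z p.1 p.2) :=
  card_eq_sum_card_fiberwise fun _ _ => mem_univ _

theorem card_colorClass_lt {c : Q → Q → κ} {i : κ} {r : ℕ} (hc : ¬ IsDiamond c i r) (x z : Q) :
    #(colorClass c x z i i) < r :=
  card_lt_of_not_isDiamond hc fun y hy => by simpa [and_assoc] using hy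

theorem card_colorClass_le {c : Q → Q → Fin 2} {i j : Fin 2} (hij : i ≠ j) {A B : ℕ}
    (hi : ¬ IsDiamond c i (A + 1)) (hj : ¬ IsDiamond c j (B + 1)) (x z : Q) :
    (#(colorClass c x z i j) : ℤ) ≤ A + B + 1 + ⌊(√(1 + 8 * A * B) - 1) / 2⌋ := by
  set T := colorClass c x z i j
  refine le_of_sum_range_le_sum_min_add_sum_min
    (sum_range_card_le_sum_min_add_sum_min T (fun u v => c u v = i) ?_ ?_)
  · intro w _
    refine Nat.lt_succ_iff.1 (card_lt_of_not_isDiamond hi (x := x) (z := w) fun y hy => ?_)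
    simp only [mem_filter, mem_colorClass, T] at hy
    exact ⟨hy.1.1.1, hy.2.1, hy.1.2.1, hy.2.2⟩
  · intro v _
    refine Nat.lt_succ_iff.1 (card_lt_of_not_isDiamond hj (x := v) (z := z) fun y hy => ?_)
    simp only [mem_filter, mem_colorClass, T] at hy
    exact ⟨hy.2.1, hy.1.1.2, by omega, hy.1.2.2⟩

theorem card_Ioo_le_of_not_isDiamond {c : Q → Q → Fin 2} {A B : ℕ}
    (h0 : ¬ IsDiamond c 0 (A + 1)) (h1 : ¬ IsDiamond c 1 (B + 1)) (x z : Q) :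
    (#(Ioo x z) : ℤ) ≤ 3 * (A + B) + 2 + 2 * ⌊(√(1 + 8 * A * B) - 1) / 2⌋ := by
  have h00 := card_colorClass_lt h0 x z
  have h11 := card_colorClass_lt h1 x z
  have h01 := card_colorClass_le (by decide) h0 h1 x z
  have h10 := card_colorClass_le (by decide) h1 h0 x z
  rw [mul_right_comm (8 : ℝ)] at h10
  rw [card_Ioo_eq_sum_card_colorClass c x z, Fintype.sum_prod_type]
  simp only [Fin.sum_univ_two]
  push_cast
  omega

end ColorClass

/-- `CR^2(⋄_r, ⋄_s) ≤ 2⌊(√(1+8(r−1)(s−1))−1)/2⌋ + 3(r+s) − 1`: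
for `r, s ≥ 2` and `N` equal to this value, every 2-coloring of the 2-chains of the
chain `C_N` contains an `r`-diamond in color `0` or an `s`-diamond in color `1`. -/
theorem chain_ramsey_diamonds_upper
    (r s : ℕ) (hr : 2 ≤ r) (hs : 2 ≤ s) (N : ℕ)
    (hN : (N : ℤ) =
      2 * ⌊(Real.sqrt (1 + 8 * ((r : ℝ) - 1) * ((s : ℝ) - 1)) - 1) / 2⌋ +
        3 * ((r : ℤ) + (s : ℤ)) - 1) :
    ∀ c : Fin N → Fin N → Fin 2,
      IsDiamond c 0 r ∨ IsDiamond c 1 s := by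
  intro c
  by_contra! h
  obtain ⟨A, rfl⟩ : ∃ A, r = A + 1 := ⟨r - 1, by omega⟩
  obtain ⟨B, rfl⟩ : ∃ B, s = B + 1 := ⟨s - 1, by omega⟩
  push_cast [add_sub_cancel_right] at hN
  have hm := floor_sqrt_one_add_nonneg A B
  obtain ⟨n, rfl⟩ : ∃ n, N = n + 2 := ⟨N - 2, by omega⟩
  have hIoo := card_Ioo_le_of_not_isDiamond h.1 h.2 0 (Fin.last (n + 1))
  rw [Fin.card_Ioo, Fin.val_last, Fin.val_zero, tsub_zero, add_tsub_cancel_right] at hIoo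
  omega
end

section
/- For integers s ≥ r ≥ 2, there exists a 2-coloring of the 2-chains of the chain C_{2s+2} that contains no s-diamond in color 1 and no r-diamond in color 2. (That is, CR^2(⋄_s, ⋄_r) > 2s + 2.) -/
/-!
Colour a pair `a < b` of `C_{2s+2} = {0, …, 2s+1}` with colour `0` when `b - a < s`, and also
for the single pair `(0, s)`; every other pair gets colour `1`.
The middle vertices of a colour-`0` diamond from `x` to `z` lie both in the open interval
`(x, z)` and in `[z + 1 - s, x + s]`; if there are `s` of them, the first interval forces
`z - x > s` and the second `z - x ≤ s`.
The middle `y` of a colour-`1` diamond satisfies `x + s ≤ y` and `y + s ≤ z ≤ 2s + 1`,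
so `y ∈ {s, s + 1}`, and `y = s` would force `x = 0`, the excepted pair. Hence `y = s + 1`,
and such a diamond has at most one middle vertex.
-/

open Finset

theorem IsDiamond.of_comp {P Q κ : Type*} [Preorder P] [Preorder Q] (f : P ↪o Q)
    {c : Q → Q → κ} {i : κ} {r : ℕ} (h : IsDiamond (fun a b => c (f a) (f b)) i r) :
    IsDiamond c i r := by
  obtain ⟨x, z, y, hy, hxyz⟩ := h
  exact ⟨f x, f z, f ∘ y, f.injective.comp hy, fun k => by simpa using hxyz k⟩

theorem IsDiamond.le_card_filter_Ioo {Q κ : Type*} [Preorder Q] [LocallyFiniteOrder Q]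
    [DecidableEq κ] {c : Q → Q → κ} {i : κ} {r : ℕ} (h : IsDiamond c i r) :
    ∃ x z, r ≤ #{y ∈ Ioo x z | c x y = i ∧ c y z = i} := by
  obtain ⟨x, z, y, hy, hxyz⟩ := h
  refine ⟨x, z, ?_⟩
  have hmaps : ∀ k ∈ (univ : Finset (Fin r)), y k ∈ {y ∈ Ioo x z | c x y = i ∧ c y z = i} :=
    fun k _ => by
      obtain ⟨hxy, hyz, hcx, hcz⟩ := hxyz k
      simp [hxy, hyz, hcx, hcz]
  simpa using card_le_card_of_injOn y hmaps hy.injOn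

def diamondFreeColoring (s a b : ℕ) : Fin 2 :=
  if b < a + s ∨ (a = 0 ∧ b = s) then 0 else 1

section

variable {s a b : ℕ}

theorem diamondFreeColoring_eq_zero_iff :
    diamondFreeColoring s a b = 0 ↔ b < a + s ∨ (a = 0 ∧ b = s) := by
  unfold diamondFreeColoring
  split_ifs with h <;> simp [h]

theorem diamondFreeColoring_eq_one_iff :
    diamondFreeColoring s a b = 1 ↔ a + s ≤ b ∧ ¬(a = 0 ∧ b = s) := by
  unfold diamondFreeColoring
  split_ifs with h <;> simp <;> omega

theorem not_isDiamond_diamondFreeColoring_zero (hs : 0 < s) :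
    ¬ IsDiamond (diamondFreeColoring s) 0 s := by
  intro h
  obtain ⟨x, z, hcard⟩ := h.le_card_filter_Ioo
  set M := {y ∈ Ioo x z | diamondFreeColoring s x y = 0 ∧ diamondFreeColoring s y z = 0}
  have hIoo : s ≤ z - x - 1 := hcard.trans ((card_filter_le _ _).trans_eq (Nat.card_Ioo x z))
  have hIcc : M ⊆ Icc (z + 1 - s) (x + s) := by
    intro y hy
    simp only [M, mem_filter, mem_Ioo, diamondFreeColoring_eq_zero_iff] at hy
    rw [mem_Icc]
    omega
  have := hcard.trans ((card_le_card hIcc).trans_eq (Nat.card_Icc _ _))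
  omega

theorem not_isDiamond_diamondFreeColoring_one {r : ℕ} (hr : 2 ≤ r) :
    ¬ IsDiamond (fun a b : Fin (2 * s + 2) => diamondFreeColoring s a b) 1 r := by
  intro h
  obtain ⟨x, z, hcard⟩ := h.le_card_filter_Ioo
  have hmiddle : ∀ y ∈ ({y ∈ Ioo x z | diamondFreeColoring s x y = 1 ∧
      diamondFreeColoring s y z = 1} : Finset (Fin (2 * s + 2))), y.val = s + 1 := by
    intro y hy
    simp only [mem_filter, diamondFreeColoring_eq_one_iff] at hy
    omega
  have := hcard.trans (card_le_one.mpr fun a ha b hb =>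
    Fin.ext ((hmiddle a ha).trans (hmiddle b hb).symm))
  omega

end

/-- `CR^2(⋄_s, ⋄_r) > 2s + 2` for `s ≥ r ≥ 2`: there is a 2-coloring of
the 2-chains of the chain `C_{2s+2}` containing no `s`-diamond in color `0` and no
`r`-diamond in color `1`. -/
theorem chain_ramsey_diamonds_lower
    (r s : ℕ) (hr : 2 ≤ r) (hrs : r ≤ s) :
    ∃ c : Fin (2 * s + 2) → Fin (2 * s + 2) → Fin 2,
      ¬ IsDiamond c 0 s ∧ ¬ IsDiamond c 1 r := by
  refine ⟨fun a b => diamondFreeColoring s a b, fun h => ?_,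
    not_isDiamond_diamondFreeColoring_one hr⟩
  exact not_isDiamond_diamondFreeColoring_zero (by omega) (h.of_comp (Fin.valOrderEmb _))
end
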